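/- arXiv:2012.10522 — 5 statements merged into one kernel-verified Lean document; each statement's English description precedes it below -/
import Mathlib

section
/- Let T : X → X be a countable-to-one null-preserving Borel transformation on a standard probability space (X,μ) (null-preserving means T_*μ ∼ μ, i.e., T-preimages of μ-null sets are μ-null and conversely). Then there is a conull Borel set X' ⊆ X such that T(X') = X' and the restriction of the orbit equivalence relation E_T to X' is null-preserving (saturations within X' of null subsets of X' are null). -/
open MeasureTheory

/-- The orbit equivalence relation induced by a transformation `T`:
`x E_T y` iff `Tⁿ(x) = Tᵐ(y)` for some `n, m ∈ ℕ`. -/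
def OrbitRel {X : Type*} (T : X → X) (x y : X) : Prop := ∃ n m : ℕ, T^[n] x = T^[m] y

/-!
Disintegrate `μ` along `T`: a Markov kernel `κ` with `T_*μ ⊗ₘ κ` the law of `(T y, y)`. For
`T_*μ`-almost every `x`, `κ x` lives on the countable fibre `T⁻¹{x}`, so it is purely atomic, and
almost every `y` is an atom of `κ (T y)`. Since `κ ∘ₘ T_*μ = μ` and `μ ≪ T_*μ`, we get
`κ ∘ₘ μ ≪ μ`; hence if `A` is a null set of such atoms, `T '' A ⊆ {x | κ x A ≠ 0}` is null.
Images and preimages of null sets being null, so are saturations, as long as one stays inside a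
forward-invariant set of good points.

For `T(X') = X'`, keep only the points from which the `κ`-chain almost surely never leaves the
good points: each of them has a `κ`-typical, hence genuine, preimage among them. `X'` is then the
set of points whose whole forward orbit stays in that set.
-/

open Set Function ProbabilityTheory

section Iterates

variable {X : Type*} {T : X → X} {V : Set X}

theorem mapsTo_iInter_preimage_iterate : MapsTo T (⋂ n, T^[n] ⁻¹' V) (⋂ n, T^[n] ⁻¹' V) :=
  fun x hx => mem_iInter.2 fun n => by
    simpa only [mem_preimage, iterate_succ_apply] using mem_iInter.1 hx (n + 1)

theorem image_iInter_preimage_iterate_eq (hV : SurjOn T V V) :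
    T '' (⋂ n, T^[n] ⁻¹' V) = ⋂ n, T^[n] ⁻¹' V := by
  refine mapsTo_iInter_preimage_iterate.image_subset.antisymm fun x hx => ?_
  obtain ⟨y, hyV, rfl⟩ := hV (by simpa using mem_iInter.1 hx 0)
  refine ⟨y, mem_iInter.2 fun n => ?_, rfl⟩
  cases n with
  | zero => simpa using hyV
  | succ n => simpa only [mem_preimage, iterate_succ_apply] using mem_iInter.1 hx n

end Iterates

section Saturation

variable {X : Type*} [MeasurableSpace X] {μ : Measure X} {T : X → X}

theorem measure_setOf_orbitRel_eq_zero (hT : Measure.QuasiMeasurePreserving T μ μ) {C : Set X}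
    (hC : MapsTo T C C) (himage : ∀ A ⊆ C, μ A = 0 → μ (T '' A) = 0) {B : Set X}
    (hBC : B ⊆ C) (hB : μ B = 0) : μ {y | ∃ b ∈ B, OrbitRel T y b} = 0 := by
  have himage_iterate : ∀ m, μ (T^[m] '' B) = 0 := by
    intro m
    induction m with
    | zero => simpa using hB
    | succ m ih =>
      rw [iterate_succ', image_comp]
      exact himage _ ((hC.iterate m).mono_left hBC).image_subset ih
  have hsub : {y | ∃ b ∈ B, OrbitRel T y b} ⊆ ⋃ n, ⋃ m, T^[n] ⁻¹' (T^[m] '' B) := by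
    rintro y ⟨b, hb, n, m, hnm⟩
    exact mem_iUnion₂.2 ⟨n, m, b, hb, hnm.symm⟩
  exact measure_mono_null hsub <| measure_iUnion_null fun n => measure_iUnion_null fun m =>
    (hT.iterate n).preimage_null (himage_iterate m)

end Saturation

section Kernel

variable {X Y : Type*} [MeasurableSpace X] [MeasurableSpace Y] {μ : Measure X}

theorem ae_kernel_apply_eq_zero_of_comp_apply_eq_zero {κ : Kernel X Y} {A : Set Y}
    (hA : (κ ∘ₘ μ) A = 0) : ∀ᵐ x ∂μ, κ x A = 0 := by
  filter_upwards [Measure.ae_ae_of_ae_comp (measure_eq_zero_iff_ae_notMem.1 hA)] with x hx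
  exact measure_eq_zero_iff_ae_notMem.2 hx

theorem ae_measure_singleton_ne_zero {m : Measure X} {S : Set X} (hS : S.Countable)
    (h : ∀ᵐ y ∂m, y ∈ S) : ∀ᵐ y ∂m, m {y} ≠ 0 := by
  have hnull : m (S ∩ {y | m {y} = 0}) = 0 := by
    rw [← biUnion_of_singleton (S ∩ _), measure_biUnion_null_iff (hS.mono inter_subset_left)]
    exact fun y hy => hy.2
  filter_upwards [h, measure_eq_zero_iff_ae_notMem.1 hnull] with y hyS hy h0
  exact hy ⟨hyS, h0⟩

theorem ProbabilityTheory.Kernel.measurable_apply_singleton [MeasurableEq Y] (κ : Kernel X Y)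
    [IsSFiniteKernel κ] : Measurable fun p : X × Y => κ p.1 {p.2} :=
  Kernel.measurable_kernel_prodMk_left (κ := κ.prodMkRight Y)
    (measurableSet_eq_fun measurable_snd measurable_fst.snd)

end Kernel

namespace ProbabilityTheory.Kernel

variable {X : Type*} [MeasurableSpace X] {μ : Measure X} {κ : Kernel X X} {Y : Set X}

def absorbingCore (κ : Kernel X X) (Y : Set X) : Set X := {x | ∀ n, (κ ^ n) x Yᶜ = 0}

theorem measurableSet_absorbingCore (hY : MeasurableSet Y) :
    MeasurableSet (absorbingCore κ Y) := by
  simp only [absorbingCore, ofPred_forall]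
  exact .iInter fun n => (Kernel.measurable_coe _ hY.compl) (measurableSet_singleton 0)

theorem absorbingCore_subset (hY : MeasurableSet Y) : absorbingCore κ Y ⊆ Y := by
  intro x hx
  have h : Kernel.id x Yᶜ = 0 := hx 0
  simpa [Kernel.id_apply, Measure.dirac_apply' _ hY.compl] using h

theorem ae_mem_absorbingCore (hY : MeasurableSet Y) {x : X} (hx : x ∈ absorbingCore κ Y) :
    ∀ᵐ y ∂κ x, y ∈ absorbingCore κ Y := by
  refine ae_all_iff.2 fun n => ?_
  have h := hx (1 + n)
  rw [pow_add_apply_eq_lintegral _ _ _ _ hY.compl, pow_one,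
    lintegral_eq_zero_iff (Kernel.measurable_coe _ hY.compl)] at h
  exact h

theorem _root_.MeasureTheory.Measure.AbsolutelyContinuous.kernel_pow_comp (hκ : κ ∘ₘ μ ≪ μ)
    (n : ℕ) : (κ ^ n) ∘ₘ μ ≪ μ := by
  induction n with
  | zero => exact (Measure.id_comp (μ := μ)).le.absolutelyContinuous
  | succ n ih =>
    change ((κ ^ n) ∘ₖ κ) ∘ₘ μ ≪ μ
    rw [← Measure.comp_assoc]
    exact (hκ.comp_right _).trans ih

theorem measure_compl_absorbingCore (hκ : κ ∘ₘ μ ≪ μ) (hY : μ Yᶜ = 0) :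
    μ (absorbingCore κ Y)ᶜ = 0 := by
  refine ae_all_iff.2 fun n => ?_
  exact ae_kernel_apply_eq_zero_of_comp_apply_eq_zero (hκ.kernel_pow_comp n hY)

end ProbabilityTheory.Kernel

section Disintegration

variable {X : Type*} [MeasurableSpace X] {μ : Measure X} {T : X → X} {κ : Kernel X X}

theorem exists_isMarkovKernel_compProd_map_eq [StandardBorelSpace X] [Nonempty X]
    [IsFiniteMeasure μ] :
    ∃ κ : Kernel X X, IsMarkovKernel κ ∧ μ.map T ⊗ₘ κ = μ.map fun y => (T y, y) := by
  have h := (μ.map fun y => (T y, y)).disintegrate (μ.map fun y => (T y, y)).condKernel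
  rw [Measure.fst_map_prodMk measurable_id'] at h
  exact ⟨_, inferInstance, h⟩

theorem measure_image_eq_zero_of_comp_absolutelyContinuous (hκ : κ ∘ₘ μ ≪ μ) {A : Set X}
    (hA : A ⊆ {y | κ (T y) {y} ≠ 0}) (hA0 : μ A = 0) : μ (T '' A) = 0 := by
  refine measure_mono_null ?_ (ae_iff.1 (ae_kernel_apply_eq_zero_of_comp_apply_eq_zero (hκ hA0)))
  rintro _ ⟨y, hy, rfl⟩ h
  exact hA hy (measure_mono_null (singleton_subset_iff.2 hy) h)

theorem exists_measurableSet_subset_surjOn [IsMarkovKernel κ] (hκ : κ ∘ₘ μ ≪ μ) {G : Set X}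
    (hG : μ Gᶜ = 0) (hfib : ∀ x ∈ G, ∀ᵐ y ∂κ x, T y = x) :
    ∃ V ⊆ G, MeasurableSet V ∧ μ Vᶜ = 0 ∧ SurjOn T V V := by
  have hYm : MeasurableSet (toMeasurable μ Gᶜ)ᶜ := (measurableSet_toMeasurable μ _).compl
  have hVG : Kernel.absorbingCore κ (toMeasurable μ Gᶜ)ᶜ ⊆ G :=
    (Kernel.absorbingCore_subset hYm).trans (compl_subset_comm.1 (subset_toMeasurable μ _))
  refine ⟨_, hVG, Kernel.measurableSet_absorbingCore hYm,
    Kernel.measure_compl_absorbingCore hκ (by rwa [compl_compl, measure_toMeasurable]),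
    fun x hx => ?_⟩
  exact ((Kernel.ae_mem_absorbingCore hYm hx).and (hfib x (hVG hx))).exists

variable [SFinite μ] [IsSFiniteKernel κ] (hT : Measurable T)
  (hκ : μ.map T ⊗ₘ κ = μ.map fun y => (T y, y))
include hT hκ

theorem comp_map_eq_of_compProd_map_eq : κ ∘ₘ μ.map T = μ := by
  rw [← Measure.snd_compProd, hκ, Measure.snd_map_prodMk hT, Measure.map_id']

theorem ae_ae_apply_eq_of_compProd_map_eq [MeasurableEq X] :
    ∀ᵐ x ∂μ.map T, ∀ᵐ y ∂κ x, T y = x := by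
  have h : ∀ᵐ p ∂(μ.map T ⊗ₘ κ), T p.2 = p.1 := by
    rw [hκ]
    exact (ae_map_iff (hT.prodMk measurable_id).aemeasurable
      (measurableSet_eq_fun (f := fun p : X × X => T p.2) (hT.comp measurable_snd)
        measurable_fst)).2 (ae_of_all _ fun _ => rfl)
  exact Measure.ae_ae_of_ae_compProd h

theorem ae_kernel_apply_singleton_ne_zero_of_compProd_map_eq [MeasurableEq X]
    (hctble : ∀ x, (T ⁻¹' {x}).Countable) : ∀ᵐ y ∂μ, κ (T y) {y} ≠ 0 := by
  have h : ∀ᵐ p ∂(μ.map T ⊗ₘ κ), κ p.1 {p.2} ≠ 0 := by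
    refine Measure.ae_compProd_of_ae_ae
      ((κ.measurable_apply_singleton) (measurableSet_singleton 0)).compl ?_
    filter_upwards [ae_ae_apply_eq_of_compProd_map_eq hT hκ] with x hx
    exact ae_measure_singleton_ne_zero (hctble x) hx
  rw [hκ] at h
  exact ae_of_ae_map (hT.prodMk measurable_id).aemeasurable h

end Disintegration

/-- For a countable-to-one null-preserving Borel transformation `T` there is a conull
Borel set `X'` with `T(X') = X'` on which the orbit equivalence relation `E_T` is
null-preserving. -/
theorem exists_conull_invariant_null_preserving
    {X : Type*} [MeasurableSpace X] [StandardBorelSpace X]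
    (μ : Measure X) [IsProbabilityMeasure μ]
    (T : X → X) (hTmeas : Measurable T)
    (hctble : ∀ x : X, (T ⁻¹' {x}).Countable)
    (hnp : ∀ B : Set X, MeasurableSet B → (μ (T ⁻¹' B) = 0 ↔ μ B = 0)) :
    ∃ X' : Set X, MeasurableSet X' ∧ μ X'ᶜ = 0 ∧ T '' X' = X' ∧
      ∀ B : Set X, B ⊆ X' → MeasurableSet B → μ B = 0 →
        μ {y ∈ X' | ∃ b ∈ B, OrbitRel T y b} = 0 := by
  have hqmp : Measure.QuasiMeasurePreserving T μ μ :=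
    ⟨hTmeas, .mk fun B hB hB0 => by rw [Measure.map_apply hTmeas hB]; exact (hnp B hB).2 hB0⟩
  have hac : μ ≪ μ.map T :=
    .mk fun B hB hB0 => (hnp B hB).1 (by rwa [Measure.map_apply hTmeas hB] at hB0)
  have := nonempty_of_isProbabilityMeasure μ
  obtain ⟨κ, _, hκ⟩ := exists_isMarkovKernel_compProd_map_eq (μ := μ) (T := T)
  have hcomp : κ ∘ₘ μ ≪ μ := by
    simpa only [comp_map_eq_of_compProd_map_eq hTmeas hκ] using hac.comp_right κ
  obtain ⟨V, hVG, hVm, hV0, hsurj⟩ := exists_measurableSet_subset_surjOn hcomp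
    (G := {y | κ (T y) {y} ≠ 0 ∧ ∀ᵐ z ∂κ y, T z = y})
    ((ae_kernel_apply_singleton_ne_zero_of_compProd_map_eq hTmeas hκ hctble).and
      (hac.ae_le (ae_ae_apply_eq_of_compProd_map_eq hTmeas hκ)))
    fun _ hx => hx.2
  refine ⟨⋂ n, T^[n] ⁻¹' V, .iInter fun n => hTmeas.iterate n hVm, ?_,
    image_iInter_preimage_iterate_eq hsurj, fun B hB _ hB0 => ?_⟩
  · rw [compl_iInter]
    exact measure_iUnion_null fun n => (hqmp.iterate n).preimage_null hV0
  · refine measure_mono_null (fun _ hy => hy.2) (measure_setOf_orbitRel_eq_zero hqmp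
      mapsTo_iInter_preimage_iterate (fun A hA hA0 => ?_) hB hB0)
    exact measure_image_eq_zero_of_comp_absolutelyContinuous hcomp
      (fun y hy => (hVG (by simpa using mem_iInter.1 (hA hy) 0)).1) hA0
end

section
/- T-recurrence: Let T : X → X be a countable-to-one, surjective, μ-preserving Borel transformation on a standard probability space (X,μ) with E_T null-preserving. Then every Borel set U ⊆ X contains a Borel subset U' ⊆ U with μ(U \ U') = 0 such that for every x in the E_T-saturation of U', there is n ≥ 1 with Tⁿ(x) ∈ U'. In particular, every Borel set is T-recurrent modulo a null set: for a.e. x ∈ U there is n ≥ 1 with Tⁿ(x) ∈ U. -/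
/-!
Points of `U` that return to `U` infinitely often form a Borel subset `U'` which, by Poincaré
recurrence, has full measure in `U`. If `x` is orbit-equivalent to `u ∈ U'`, the forward orbits of
`x` and `u` eventually coincide, so `x` visits `U` at some iterate `Tᵏ u` lying beyond the point
where they merge; and `Tᵏ u` is again in `U'`, because returning infinitely often is shift-invariant.
-/

open MeasureTheory Filter ENNReal

/-- A binary relation `E` on `X` is null-preserving (w.r.t. `μ`) if the `E`-saturation of
every `μ`-null Borel set is `μ`-null. -/
def NullPreservingRel {X : Type*} [MeasurableSpace X] (E : X → X → Prop) (μ : Measure X) :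
    Prop :=
  ∀ B : Set X, MeasurableSet B → μ B = 0 → μ {x | ∃ b ∈ B, E x b} = 0

/-- `ρ` is the Radon–Nikodym cocycle of `E` corresponding to `μ`: it is Borel, positive on
`E`-related pairs, satisfies the cocycle identity on `E`-classes, and satisfies the expected
change-of-variables formula along every partial Borel injection whose graph is contained
in `E`. -/
def IsRNCocycle {X : Type*} [MeasurableSpace X] (E : X → X → Prop) (μ : Measure X)
    (ρ : X → X → ℝ) : Prop :=
  Measurable (Function.uncurry ρ) ∧
  (∀ x y, E x y → 0 < ρ x y) ∧
  (∀ x y z, E x y → E y z → ρ x y * ρ y z = ρ x z) ∧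
  ∀ (γ : X → X) (D : Set X), Measurable γ → MeasurableSet D → Set.InjOn γ D →
    (∀ x ∈ D, E (γ x) x) → ∀ f : X → ℝ, Integrable f μ →
      ∫ x in γ '' D, f x ∂μ = ∫ x in D, ρ (γ x) x * f (γ x) ∂μ

/-- The σ-algebra of `T`-invariant Borel sets. -/
def invSigma {X : Type*} [m0 : MeasurableSpace X] (T : X → X) : MeasurableSpace X where
  MeasurableSet' B := MeasurableSet B ∧ T ⁻¹' B = B
  measurableSet_empty := ⟨MeasurableSet.empty, rfl⟩
  measurableSet_compl := fun B hB => ⟨hB.1.compl, by rw [Set.preimage_compl, hB.2]⟩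
  measurableSet_iUnion := fun s hs =>
    ⟨MeasurableSet.iUnion fun i => (hs i).1, by
      rw [Set.preimage_iUnion]
      exact Set.iUnion_congr fun i => (hs i).2⟩

/-- `▷_T^n · x = ⋃_{i ≤ n} T^{-i}(x)`. -/
def triangle {X : Type*} (T : X → X) (n : ℕ) (x : X) : Set X :=
  ⋃ i ≤ n, (T^[i]) ⁻¹' {x}

/-- `S ∈ 𝒯_x`: `S` is a subtree of the graph of `T` of finite height rooted at `x` and
directed towards `x`. -/
def TreeAt {X : Type*} (T : X → X) (x : X) (S : Set X) : Prop :=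
  x ∈ S ∧ (∃ n : ℕ, S ⊆ triangle T n x) ∧ ∀ y ∈ S, y ≠ x → T y ∈ S

/-- The `ρ`-weighted sum `Σ_{y ∈ S} g(y) ρ(y,x)`. -/
noncomputable def wsum {X : Type*} (ρ : X → X → ℝ) (g : X → ℝ) (S : Set X) (x : X) : ℝ :=
  ∑' y : S, g (y : X) * ρ (y : X) x

/-- The `ρ`-weight `|S|_ρ^x = Σ_{y ∈ S} ρ(y,x)`, computed in `ℝ≥0∞` so that infinite
weights are meaningful. -/
noncomputable def wtE {X : Type*} (ρ : X → X → ℝ) (S : Set X) (x : X) : ℝ≥0∞ :=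
  ∑' y : S, ENNReal.ofReal (ρ (y : X) x)

/-- The `ρ`-weighted average `A_f^ρ[S] = (Σ_{y ∈ S} f(y) ρ(y,x)) / |S|_ρ^x`. -/
noncomputable def wavg {X : Type*} (ρ : X → X → ℝ) (f : X → ℝ) (S : Set X) (x : X) : ℝ :=
  wsum ρ f S x / wsum ρ (fun _ => 1) S x

section RecurrentPart

variable {X : Type*} (T : X → X) (U : Set X)

def recurrentPart : Set X := U ∩ {x | ∃ᶠ n in atTop, T^[n] x ∈ U}

variable {T U}

theorem recurrentPart_subset : recurrentPart T U ⊆ U := Set.inter_subset_left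

theorem measurableSet_recurrentPart [MeasurableSpace X] (hT : Measurable T)
    (hU : MeasurableSet U) : MeasurableSet (recurrentPart T U) := by
  have hlimsup : {x | ∃ᶠ n in atTop, T^[n] x ∈ U} = limsup (fun n ↦ T^[n] ⁻¹' U) atTop := by
    ext x
    rw [mem_limsup_iff_frequently_mem]
    rfl
  rw [recurrentPart, hlimsup]
  exact hU.inter (.measurableSet_limsup fun n ↦ hT.iterate n hU)

theorem MeasureTheory.Conservative.measure_diff_recurrentPart [MeasurableSpace X] {μ : Measure X}
    (hT : Conservative T μ) (hU : NullMeasurableSet U μ) : μ (U \ recurrentPart T U) = 0 := by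
  rw [recurrentPart, Set.sdiff_self_inter, measure_eq_zero_iff_ae_notMem]
  filter_upwards [hT.ae_mem_imp_frequently_image_mem hU] with x hx ⟨hxU, hxF⟩
  exact hxF (hx hxU)

theorem iterate_mem_recurrentPart {x : X} (hx : x ∈ recurrentPart T U) {k : ℕ}
    (hk : T^[k] x ∈ U) : T^[k] x ∈ recurrentPart T U := by
  refine ⟨hk, show ∃ᶠ n in atTop, T^[n] (T^[k] x) ∈ U from ?_⟩
  have hshift : ∃ᶠ n in atTop, T^[n] x ∈ U := hx.2
  rw [← map_add_atTop_eq_nat k, frequently_map] at hshift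
  simpa only [← Function.iterate_add_apply] using hshift

theorem exists_pos_iterate_mem_recurrentPart {x u : X} (hu : u ∈ recurrentPart T U)
    (hxu : OrbitRel T x u) : ∃ n : ℕ, 1 ≤ n ∧ T^[n] x ∈ recurrentPart T U := by
  obtain ⟨n, m, hnm⟩ := hxu
  obtain ⟨k, hk, hkU⟩ := frequently_atTop.1 hu.2 (m + 1)
  refine ⟨k - m + n, by omega, ?_⟩
  rw [Function.iterate_add_apply, hnm, ← Function.iterate_add_apply, Nat.sub_add_cancel (by omega)]
  exact iterate_mem_recurrentPart hu hkU

end RecurrentPart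

theorem T_recurrence_general
    {X : Type*} [MeasurableSpace X]
    (μ : Measure X) [IsProbabilityMeasure μ]
    (T : X → X)
    (hpmp : MeasurePreserving T μ μ)
    (U : Set X) (hU : MeasurableSet U) :
    (∃ U' : Set X, U' ⊆ U ∧ MeasurableSet U' ∧ μ (U \ U') = 0 ∧
      ∀ x : X, (∃ u ∈ U', OrbitRel T x u) → ∃ n : ℕ, 1 ≤ n ∧ T^[n] x ∈ U') ∧
    ∀ᵐ x ∂μ, x ∈ U → ∃ n : ℕ, 1 ≤ n ∧ T^[n] x ∈ U := by
  have hnull : μ (U \ recurrentPart T U) = 0 :=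
    hpmp.conservative.measure_diff_recurrentPart hU.nullMeasurableSet
  have hreturn : ∀ x : X, (∃ u ∈ recurrentPart T U, OrbitRel T x u) →
      ∃ n : ℕ, 1 ≤ n ∧ T^[n] x ∈ recurrentPart T U :=
    fun x ⟨_, hu, hxu⟩ ↦ exists_pos_iterate_mem_recurrentPart hu hxu
  refine ⟨⟨recurrentPart T U, recurrentPart_subset,
    measurableSet_recurrentPart hpmp.measurable hU, hnull, hreturn⟩, ?_⟩
  filter_upwards [measure_eq_zero_iff_ae_notMem.1 hnull] with x hx hxU
  have hxR : x ∈ recurrentPart T U := by_contra fun h ↦ hx ⟨hxU, h⟩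
  obtain ⟨n, hn, hnR⟩ := hreturn x ⟨x, hxR, 0, 0, rfl⟩
  exact ⟨n, hn, recurrentPart_subset hnR⟩

/-- **T-recurrence**: every Borel set is `T`-recurrent modulo a null set; in fact it has
a conull-in-it Borel subset `U'` such that every point of the `E_T`-saturation of `U'`
returns to `U'` under a positive iterate of `T`. -/
theorem T_recurrence
    {X : Type*} [MeasurableSpace X] [StandardBorelSpace X]
    (μ : Measure X) [IsProbabilityMeasure μ]
    (T : X → X) (hTmeas : Measurable T)
    (hsurj : Function.Surjective T)
    (hctble : ∀ x : X, (T ⁻¹' {x}).Countable)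
    (hpmp : MeasurePreserving T μ μ)
    (hnullpres : NullPreservingRel (OrbitRel T) μ)
    (U : Set X) (hU : MeasurableSet U) :
    (∃ U' : Set X, U' ⊆ U ∧ MeasurableSet U' ∧ μ (U \ U') = 0 ∧
      ∀ x : X, (∃ u ∈ U', OrbitRel T x u) → ∃ n : ℕ, 1 ≤ n ∧ T^[n] x ∈ U') ∧
    ∀ᵐ x ∂μ, x ∈ U → ∃ n : ℕ, 1 ≤ n ∧ T^[n] x ∈ U :=
  T_recurrence_general μ T hpmp U hU
end

section
/- Forward-closed implies invariant mod null: Let T : X → X be a countable-to-one, surjective, μ-preserving Borel transformation on a standard probability space (X,μ) with E_T null-preserving. Then every Borel set U ⊆ X with T(U) ⊆ U satisfies [U]_{E_T} = U off an E_T-invariant μ-null set; that is, there is an E_T-invariant μ-null Borel set N such that [U]_{E_T} \ N = U \ N. -/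
open MeasureTheory Filter ENNReal

/-!
If `T(U) ⊆ U`, the sets `T⁻ⁿ(U)` increase and, `T` being measure preserving, all have the measure
of `U`; so `V = ⋃ₙ T⁻ⁿ(U)` differs from `U` by a null set `V \ U`. The saturation of `U` lies in
`V`. Since `E_T` is null-preserving, `V \ U` sits inside a measurable invariant null set `N`
(saturate and take measurable hulls countably often), and off `N` the saturation of `U` is `U`.
-/

namespace OrbitRel

variable {X : Type*} {T : X → X}

theorem refl (x : X) : OrbitRel T x x := ⟨0, 0, rfl⟩

theorem symm {x y : X} : OrbitRel T x y → OrbitRel T y x := fun ⟨n, m, h⟩ => ⟨m, n, h.symm⟩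

theorem mem_iUnion_preimage_iterate {U : Set X} (hTU : Set.MapsTo T U U) {x u : X}
    (hxu : OrbitRel T x u) (hu : u ∈ U) : x ∈ ⋃ n, T^[n] ⁻¹' U := by
  obtain ⟨n, m, h⟩ := hxu
  exact Set.mem_iUnion.2 ⟨n, by simpa only [Set.mem_preimage, h] using hTU.iterate m hu⟩

end OrbitRel

section NullPreserving

variable {X : Type*} [MeasurableSpace X] {E : X → X → Prop} {μ : Measure X}

def saturationHull (E : X → X → Prop) (μ : Measure X) (B : Set X) : ℕ → Set X
  | 0 => toMeasurable μ B
  | k + 1 => toMeasurable μ {x | ∃ b ∈ saturationHull E μ B k, E x b}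

theorem measurableSet_saturationHull (B : Set X) (k : ℕ) :
    MeasurableSet (saturationHull E μ B k) := by
  cases k <;> exact measurableSet_toMeasurable μ _

theorem measure_saturationHull (hE : NullPreservingRel E μ) {B : Set X} (hB : μ B = 0) (k : ℕ) :
    μ (saturationHull E μ B k) = 0 := by
  induction k with
  | zero => rwa [saturationHull, measure_toMeasurable]
  | succ k ih =>
    rw [saturationHull, measure_toMeasurable]
    exact hE _ (measurableSet_saturationHull B k) ih

theorem NullPreservingRel.exists_measurableSet_invariant_null_superset
    (hE : NullPreservingRel E μ) (hsymm : ∀ x y, E x y → E y x) {B : Set X} (hB : μ B = 0) :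
    ∃ N, B ⊆ N ∧ MeasurableSet N ∧ μ N = 0 ∧ ∀ x y, E x y → (x ∈ N ↔ y ∈ N) := by
  have hstep (k : ℕ) {x y : X} (hxy : E x y) (hy : y ∈ saturationHull E μ B k) :
      x ∈ ⋃ k, saturationHull E μ B k :=
    Set.mem_iUnion.2 ⟨k + 1, subset_toMeasurable μ _ ⟨y, hy, hxy⟩⟩
  refine ⟨⋃ k, saturationHull E μ B k,
    (subset_toMeasurable μ B).trans (Set.subset_iUnion (saturationHull E μ B) 0),
    .iUnion (measurableSet_saturationHull B), measure_iUnion_null (measure_saturationHull hE hB),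
    fun x y hxy => ⟨fun hx => ?_, fun hy => ?_⟩⟩
  · obtain ⟨k, hk⟩ := Set.mem_iUnion.1 hx
    exact hstep k (hsymm x y hxy) hk
  · obtain ⟨k, hk⟩ := Set.mem_iUnion.1 hy
    exact hstep k hxy hk

end NullPreserving

theorem MeasureTheory.MeasurePreserving.measure_iUnion_preimage_iterate_diff
    {X : Type*} [MeasurableSpace X] {μ : Measure X} [IsFiniteMeasure μ] {T : X → X}
    (hT : MeasurePreserving T μ μ) {U : Set X} (hU : MeasurableSet U) (hTU : Set.MapsTo T U U) :
    μ ((⋃ n, T^[n] ⁻¹' U) \ U) = 0 := by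
  have hmono : Monotone fun n => T^[n] ⁻¹' U := monotone_nat_of_le_succ fun n x hx => by
    simpa only [Set.mem_preimage, Function.iterate_succ_apply'] using hTU hx
  have hmeasure : μ (⋃ n, T^[n] ⁻¹' U) = μ U := by
    simp only [hmono.directed_le.measure_iUnion,
      fun n => (hT.iterate n).measure_preimage hU.nullMeasurableSet, ciSup_const]
  have hsub : U ⊆ ⋃ n, T^[n] ⁻¹' U := fun x hx => Set.mem_iUnion.2 ⟨0, hx⟩
  rw [measure_sdiff hsub hU.nullMeasurableSet (measure_ne_top μ U), hmeasure, tsub_self]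

theorem forward_closed_invariant_mod_null_general
    {X : Type*} [MeasurableSpace X]
    (μ : Measure X) [IsProbabilityMeasure μ]
    (T : X → X)
    (hpmp : MeasurePreserving T μ μ)
    (hnullpres : NullPreservingRel (OrbitRel T) μ)
    (U : Set X) (hU : MeasurableSet U) (hTU : T '' U ⊆ U) :
    ∃ N : Set X, MeasurableSet N ∧ μ N = 0 ∧
      (∀ x y, OrbitRel T x y → (x ∈ N ↔ y ∈ N)) ∧
      {x | ∃ u ∈ U, OrbitRel T x u} \ N = U \ N := by
  have hmaps : Set.MapsTo T U U := Set.mapsTo_iff_image_subset.2 hTU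
  obtain ⟨N, hBN, hNmeas, hNnull, hNinv⟩ :=
    hnullpres.exists_measurableSet_invariant_null_superset (fun _ _ => OrbitRel.symm)
      (hpmp.measure_iUnion_preimage_iterate_diff hU hmaps)
  refine ⟨N, hNmeas, hNnull, hNinv, ?_⟩
  ext x
  refine ⟨fun ⟨⟨u, hu, hxu⟩, hxN⟩ => ⟨?_, hxN⟩, fun ⟨hxU, hxN⟩ => ⟨⟨x, hxU, .refl x⟩, hxN⟩⟩
  by_contra hxU
  exact hxN (hBN ⟨hxu.mem_iUnion_preimage_iterate hmaps hu, hxU⟩)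

/-- **Forward-closed implies invariant mod null**: if `T(U) ⊆ U` then the
`E_T`-saturation of `U` agrees with `U` off an `E_T`-invariant null set. -/
theorem forward_closed_invariant_mod_null
    {X : Type*} [MeasurableSpace X] [StandardBorelSpace X]
    (μ : Measure X) [IsProbabilityMeasure μ]
    (T : X → X) (hTmeas : Measurable T)
    (hsurj : Function.Surjective T)
    (hctble : ∀ x : X, (T ⁻¹' {x}).Countable)
    (hpmp : MeasurePreserving T μ μ)
    (hnullpres : NullPreservingRel (OrbitRel T) μ)
    (U : Set X) (hU : MeasurableSet U) (hTU : T '' U ⊆ U) :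
    ∃ N : Set X, MeasurableSet N ∧ μ N = 0 ∧
      (∀ x y, OrbitRel T x y → (x ∈ N ↔ y ∈ N)) ∧
      {x | ∃ u ∈ U, OrbitRel T x u} \ N = U \ N :=
  forward_closed_invariant_mod_null_general μ T hpmp hnullpres U hU hTU
end

section
/- The Radon–Nikodym cocycle of a Markov chain: Let I be a countable set, π a probability vector on I with π(i) > 0 for all i, P an I×I stochastic matrix, and ℙ the Borel probability measure on I^ℕ determined by ℙ([w]) = π(w_0)P(w_0,w_1)⋯P(w_{n−2},w_{n−1}) on cylinders [w], w ∈ Iⁿ. Then for every i ∈ I and every finite word w ∈ I^{<ℕ}, ℙ([i⌢w]) = ∫_{[w]} ρ(i⌢x, x) dℙ(x), where ρ(i⌢x, x) := (π(i)/π(x_0)) P(i, x_0); consequently, the cocycle on the shift orbit equivalence relation E_s generated by ρ(x, s(x)) := (π(x_0)/π(x_1)) P(x_0, x_1) is the Radon–Nikodym cocycle of E_s corresponding to ℙ. -/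
open MeasureTheory

/-- The shift map on infinite words. -/
def shift {I : Type*} (x : ℕ → I) : ℕ → I := fun n => x (n + 1)

/-- The orbit equivalence relation `E_s` of the shift:
`x E_s y` iff `sⁿ(x) = sᵐ(y)` for some `n, m ∈ ℕ`. -/
def ShiftRel {I : Type*} (x y : ℕ → I) : Prop := ∃ n m : ℕ, shift^[n] x = shift^[m] y

/-- The cylinder set `[w]` of infinite words extending the finite word `w`. -/
def cyl {I : Type*} (w : List I) : Set (ℕ → I) :=
  {x | ∀ k : Fin w.length, x k = w.get k}

/-- `P(w_0,w_1) ⋯ P(w_{n-2},w_{n-1})`: the product of transition probabilities along a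
word. -/
def chainP {I : Type*} (P : I → I → ℝ) : List I → ℝ
  | [] => 1
  | [_] => 1
  | a :: b :: w => P a b * chainP P (b :: w)

/-- `ℙ(w) = π(w_0) P(w_0,w_1) ⋯ P(w_{n-2},w_{n-1})`, with `ℙ(∅) = 1`. -/
def wordProb {I : Type*} (π : I → ℝ) (P : I → I → ℝ) : List I → ℝ
  | [] => 1
  | a :: w => π a * chainP P (a :: w)

/-!
On a cylinder `[v]`, the map `reprefix v u : [v] → [u]` exchanging the prefix `v` for `u`
transports `ℙ` with density `ℙ([u j]) / ℙ([v j])`, where `j = x_{|v|}` is the letter after the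
prefix: both sides are finite measures that agree on the π-system of cylinders. The cocycle
identity evaluates `ρ (reprefix v u x) x` to exactly this density. A partial injection whose graph
lies in `E_s` agrees with some `reprefix v u` on each of countably many Borel pieces of its domain,
so the change-of-variables formula follows by summing over the pieces. The integral identity on
cylinders is the case `u = [i]`, `v = []`.
-/

theorem ShiftRel.refl {I : Type*} (x : ℕ → I) : ShiftRel x x := ⟨0, 0, rfl⟩

theorem ShiftRel.symm {I : Type*} {x y : ℕ → I} : ShiftRel x y → ShiftRel y x :=
  fun ⟨n, m, h⟩ => ⟨m, n, h.symm⟩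

namespace MarkovShift

open scoped ENNReal

variable {I : Type*}

def prepend (u : List I) (z : ℕ → I) : ℕ → I :=
  fun k => if h : k < u.length then u[k] else z (k - u.length)

def reprefix (v u : List I) (x : ℕ → I) : ℕ → I :=
  prepend u (shift^[v.length] x)

def prefixWord (x : ℕ → I) (n : ℕ) : List I :=
  List.ofFn fun k : Fin n => x k

@[simp]
theorem length_prefixWord (x : ℕ → I) (n : ℕ) : (prefixWord x n).length = n :=
  List.length_ofFn

theorem shift_iterate_apply (n : ℕ) (x : ℕ → I) (k : ℕ) : shift^[n] x k = x (k + n) := by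
  induction n generalizing x with
  | zero => rfl
  | succ n ih => rw [Function.iterate_succ_apply, ih]; rfl

theorem mem_cyl {w : List I} {x : ℕ → I} :
    x ∈ cyl w ↔ ∀ (k : ℕ) (h : k < w.length), x k = w[k] :=
  ⟨fun hx k h => hx ⟨k, h⟩, fun hx k => hx k k.isLt⟩

theorem prefixWord_mem_cyl (x : ℕ → I) (n : ℕ) : x ∈ cyl (prefixWord x n) :=
  mem_cyl.2 fun k h => by simp [prefixWord]

theorem mem_cyl_iff_of_mem {w : List I} {x y : ℕ → I} (hx : x ∈ cyl w) :
    y ∈ cyl w ↔ ∀ k < w.length, y k = x k := by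
  rw [mem_cyl]
  exact forall₂_congr fun k h => by rw [mem_cyl.1 hx k h]

theorem prepend_apply_of_lt {u : List I} {z : ℕ → I} {k : ℕ} (h : k < u.length) :
    prepend u z k = u[k] :=
  dif_pos h

theorem prepend_apply_of_le {u : List I} {z : ℕ → I} {k : ℕ} (h : u.length ≤ k) :
    prepend u z k = z (k - u.length) :=
  dif_neg h.not_gt

theorem shift_iterate_prepend (u : List I) (z : ℕ → I) : shift^[u.length] (prepend u z) = z := by
  funext k
  rw [shift_iterate_apply, prepend_apply_of_le (by omega), Nat.add_sub_cancel]

theorem prepend_mem_cyl (u : List I) (z : ℕ → I) : prepend u z ∈ cyl u :=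
  mem_cyl.2 fun _ h => prepend_apply_of_lt h

theorem prepend_shift_iterate {v : List I} {x : ℕ → I} (hx : x ∈ cyl v) :
    prepend v (shift^[v.length] x) = x := by
  funext k
  rcases lt_or_ge k v.length with h | h
  · rw [prepend_apply_of_lt h, mem_cyl.1 hx k h]
  · rw [prepend_apply_of_le h, shift_iterate_apply, Nat.sub_add_cancel h]

theorem prepend_append (u v : List I) (z : ℕ → I) :
    prepend (u ++ v) z = prepend u (prepend v z) := by
  funext k
  rcases lt_or_ge k u.length with h | h
  · rw [prepend_apply_of_lt h, prepend_apply_of_lt (by simp; omega), List.getElem_append_left h]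
  · rw [prepend_apply_of_le h]
    rcases lt_or_ge k (u ++ v).length with h' | h'
    · rw [prepend_apply_of_lt h', List.getElem_append_right h,
        prepend_apply_of_lt (by simp at h'; omega)]
    · simp only [List.length_append] at h'
      rw [prepend_apply_of_le (by simpa using h'), prepend_apply_of_le (by omega),
        List.length_append, Nat.sub_add_eq]

theorem cyl_append (v t : List I) :
    cyl (v ++ t) = cyl v ∩ shift^[v.length] ⁻¹' cyl t := by
  ext x
  simp only [Set.mem_inter_iff, Set.mem_preimage, mem_cyl, shift_iterate_apply,
    List.length_append]
  constructor
  · intro h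
    refine ⟨fun k hk => ?_, fun k hk => ?_⟩
    · rw [h k (by omega), List.getElem_append_left hk]
    · rw [h (k + v.length) (by omega), List.getElem_append_right (by omega)]
      simp
  · rintro ⟨hv, ht⟩ k hk
    rcases lt_or_ge k v.length with h | h
    · rw [List.getElem_append_left h, hv k h]
    · rw [List.getElem_append_right h, ← ht _ (by omega), Nat.sub_add_cancel h]

theorem mem_cyl_singleton {a : I} {x : ℕ → I} : x ∈ cyl [a] ↔ x 0 = a :=
  ⟨fun h => mem_cyl.1 h 0 zero_lt_one, fun h => mem_cyl.2 fun k hk => by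
    obtain rfl : k = 0 := by simpa using hk
    exact h⟩

theorem mem_cyl_append_singleton {v : List I} {j : I} {x : ℕ → I} :
    x ∈ cyl (v ++ [j]) ↔ x ∈ cyl v ∧ x v.length = j := by
  rw [cyl_append, Set.mem_inter_iff, Set.mem_preimage, mem_cyl_singleton, shift_iterate_apply,
    zero_add]

theorem cyl_append_subset (v t : List I) : cyl (v ++ t) ⊆ cyl v := by
  rw [cyl_append]
  exact Set.inter_subset_left

theorem cyl_eq_iUnion_cyl_append_singleton (v : List I) : cyl v = ⋃ j, cyl (v ++ [j]) := by
  ext x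
  simp only [Set.mem_iUnion, mem_cyl_append_singleton, exists_and_left, exists_eq', and_true]

theorem pairwise_disjoint_cyl_append_singleton (v : List I) :
    Pairwise (Function.onFun Disjoint fun j => cyl (v ++ [j])) := fun _ _ hij =>
  Set.disjoint_left.2 fun _ hi hj =>
    hij ((mem_cyl_append_singleton.1 hi).2.symm.trans (mem_cyl_append_singleton.1 hj).2)

theorem cyl_nil : cyl ([] : List I) = Set.univ :=
  Set.eq_univ_of_forall fun _ => mem_cyl.2 fun _ h => absurd h (Nat.not_lt_zero _)

theorem cyl_inter_cyl (v w : List I) :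
    cyl v ∩ cyl w = ∅ ∨ ∃ t, cyl v ∩ cyl w = cyl (v ++ t) := by
  rcases (cyl v ∩ cyl w).eq_empty_or_nonempty with h | ⟨x, hxv, hxw⟩
  · exact Or.inl h
  refine Or.inr ⟨prefixWord (shift^[v.length] x) (w.length - v.length), ?_⟩
  have hx : x ∈ cyl (v ++ prefixWord (shift^[v.length] x) (w.length - v.length)) := by
    rw [cyl_append]; exact ⟨hxv, prefixWord_mem_cyl _ _⟩
  ext y
  simp only [Set.mem_inter_iff, mem_cyl_iff_of_mem hxv, mem_cyl_iff_of_mem hxw,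
    mem_cyl_iff_of_mem hx, List.length_append, length_prefixWord]
  constructor
  · rintro ⟨hv, hw⟩ k hk
    rcases lt_or_ge k v.length with h | h
    · exact hv k h
    · exact hw k (by omega)
  · intro h
    exact ⟨fun k hk => h k (by omega), fun k hk => h k (by omega)⟩

theorem reprefix_mem_cyl (v u : List I) (x : ℕ → I) : reprefix v u x ∈ cyl u :=
  prepend_mem_cyl u _

theorem reprefix_reprefix {v u : List I} {x : ℕ → I} (hx : x ∈ cyl v) :
    reprefix u v (reprefix v u x) = x := by
  rw [reprefix, reprefix, shift_iterate_prepend, prepend_shift_iterate hx]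

theorem image_reprefix {v u : List I} {A : Set (ℕ → I)} (hA : A ⊆ cyl v) :
    reprefix v u '' A = cyl u ∩ reprefix u v ⁻¹' A := by
  ext y
  constructor
  · rintro ⟨x, hx, rfl⟩
    exact ⟨reprefix_mem_cyl v u x, by rwa [Set.mem_preimage, reprefix_reprefix (hA hx)]⟩
  · rintro ⟨hy, hyA⟩
    exact ⟨_, hyA, reprefix_reprefix hy⟩

theorem cyl_inter_preimage_reprefix_cyl_append (u v t : List I) :
    cyl u ∩ reprefix u v ⁻¹' cyl (v ++ t) = cyl (u ++ t) := by
  ext y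
  simp only [cyl_append, Set.mem_inter_iff, Set.mem_preimage, reprefix, shift_iterate_prepend,
    prepend_mem_cyl, true_and]

theorem shiftRel_shift (x : ℕ → I) : ShiftRel x (shift x) := ⟨1, 0, rfl⟩

theorem shiftRel_prepend (u : List I) (z : ℕ → I) : ShiftRel (prepend u z) z :=
  ⟨u.length, 0, shift_iterate_prepend u z⟩

theorem prepend_prefixWord_shift_iterate (x : ℕ → I) (n : ℕ) :
    prepend (prefixWord x n) (shift^[n] x) = x := by
  simpa using prepend_shift_iterate (prefixWord_mem_cyl x n)

theorem exists_append_singleton_eq_cons (u : List I) (z : ℕ → I) :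
    ∃ l, u ++ [z 0] = prepend u z 0 :: l := by
  cases u with
  | nil => exact ⟨[], by simp [prepend]⟩
  | cons a u => exact ⟨u ++ [z 0], by simp [prepend]⟩

theorem isPiSystem_range_cyl : IsPiSystem (Set.range (cyl : List I → Set (ℕ → I))) := by
  rintro _ ⟨v, rfl⟩ _ ⟨w, rfl⟩ hne
  rcases cyl_inter_cyl v w with h | ⟨t, h⟩
  · exact absurd h hne.ne_empty
  · exact ⟨v ++ t, h.symm⟩

section Measurability

variable [MeasurableSpace I]

theorem measurable_shift : Measurable (shift : (ℕ → I) → ℕ → I) :=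
  measurable_pi_lambda _ fun n => measurable_pi_apply (n + 1)

theorem measurable_prepend (u : List I) : Measurable (prepend u) := by
  refine measurable_pi_lambda _ fun k => ?_
  rcases lt_or_ge k u.length with h | h
  · simp only [prepend_apply_of_lt h, measurable_const]
  · simp only [prepend_apply_of_le h]
    exact measurable_pi_apply _

theorem measurable_reprefix (v u : List I) : Measurable (reprefix v u) :=
  (measurable_prepend u).comp (measurable_shift.iterate _)

theorem measurableSet_cyl [MeasurableSingletonClass I] (w : List I) : MeasurableSet (cyl w) := by
  have : cyl w = ⋂ k : Fin w.length, (fun x : ℕ → I => x k) ⁻¹' {w.get k} := by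
    ext x; simp [cyl]
  rw [this]
  exact .iInter fun k => measurable_pi_apply _ (measurableSet_singleton _)

theorem pi_eq_generateFrom_range_cyl [Countable I] [MeasurableSingletonClass I] :
    (MeasurableSpace.pi : MeasurableSpace (ℕ → I)) =
      MeasurableSpace.generateFrom (Set.range cyl) := by
  refine le_antisymm (iSup_le fun n => ?_) (MeasurableSpace.generateFrom_le ?_)
  · rw [MeasurableSpace.comap_le_iff_le_map]
    refine @measurable_to_countable' I (ℕ → I) _ _ (.generateFrom _) _ fun i => ?_
    have : (fun x : ℕ → I => x n) ⁻¹' {i} = ⋃ w ∈ {w : List I | w.length = n}, cyl (w ++ [i]) := by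
      ext x
      simp only [Set.mem_preimage, Set.mem_singleton_iff, Set.mem_iUnion, Set.mem_ofPred_eq,
        cyl_append, Set.mem_inter_iff, exists_prop]
      constructor
      · rintro rfl
        exact ⟨prefixWord x n, length_prefixWord x n, prefixWord_mem_cyl x n,
          mem_cyl.2 fun k hk => by
            obtain rfl : k = 0 := by simpa using hk
            simp [shift_iterate_apply]⟩
      · rintro ⟨w, rfl, -, hx⟩
        simpa [shift_iterate_apply] using mem_cyl.1 hx 0
    rw [this]
    exact .biUnion (Set.to_countable _) fun w _ => .basic _ ⟨_, rfl⟩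
  · rintro _ ⟨w, rfl⟩
    exact measurableSet_cyl w

end Measurability

section Arithmetic

variable {π : I → ℝ} {P : I → I → ℝ}

theorem chainP_nonneg (hP : ∀ i j, 0 ≤ P i j) : ∀ w : List I, 0 ≤ chainP P w
  | [] | [_] => zero_le_one
  | a :: b :: w => mul_nonneg (hP a b) (chainP_nonneg hP (b :: w))

theorem chainP_pos (hP : ∀ i j, 0 < P i j) : ∀ w : List I, 0 < chainP P w
  | [] | [_] => zero_lt_one
  | a :: b :: w => mul_pos (hP a b) (chainP_pos hP (b :: w))

theorem wordProb_nonneg (hπ : ∀ i, 0 ≤ π i) (hP : ∀ i j, 0 ≤ P i j) :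
    ∀ w : List I, 0 ≤ wordProb π P w
  | [] => zero_le_one
  | a :: _ => mul_nonneg (hπ a) (chainP_nonneg hP _)

theorem wordProb_pos (hπ : ∀ i, 0 < π i) (hP : ∀ i j, 0 < P i j) :
    ∀ w : List I, 0 < wordProb π P w
  | [] => zero_lt_one
  | a :: _ => mul_pos (hπ a) (chainP_pos hP _)

theorem wordProb_cons_cons {b : I} (hb : π b ≠ 0) (a : I) (w : List I) :
    wordProb π P (a :: b :: w) = π a / π b * P a b * wordProb π P (b :: w) := by
  simp only [wordProb, chainP]
  field_simp

theorem chainP_cons_append_cons (a : I) (l t : List I) (j : I) :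
    chainP P (a :: (l ++ j :: t)) = chainP P (a :: (l ++ [j])) * chainP P (j :: t) := by
  induction l generalizing a with
  | nil => cases t <;> simp [chainP]
  | cons b l ih =>
    simp only [List.cons_append, chainP, ih b]
    ring

theorem wordProb_append_cons (v : List I) (j : I) (t : List I) :
    wordProb π P (v ++ j :: t) = wordProb π P (v ++ [j]) * chainP P (j :: t) := by
  cases v with
  | nil => simp [wordProb, chainP]
  | cons a l =>
    simp only [List.cons_append, wordProb]
    rw [chainP_cons_append_cons]
    ring

theorem hasSum_chainP_append_singleton (hrow : ∀ i, HasSum (P i) 1) (a : I) (l : List I) :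
    HasSum (fun j => chainP P (a :: (l ++ [j]))) (chainP P (a :: l)) := by
  induction l generalizing a with
  | nil => simpa [chainP] using hrow a
  | cons b l ih => simpa [chainP] using (ih b).mul_left (P a b)

theorem hasSum_wordProb_append_singleton (hπ : HasSum π 1) (hrow : ∀ i, HasSum (P i) 1)
    (u : List I) : HasSum (fun j => wordProb π P (u ++ [j])) (wordProb π P u) := by
  cases u with
  | nil => simpa [wordProb, chainP] using hπ
  | cons a l => simpa [wordProb] using (hasSum_chainP_append_singleton hrow a l).mul_left (π a)

end Arithmetic

/-- The Radon–Nikodym derivative of `reprefix v u` on `[v]`. -/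
noncomputable def reprefixDensity (π : I → ℝ) (P : I → I → ℝ) (v u : List I) (x : ℕ → I) : ℝ :=
  wordProb π P (u ++ [x v.length]) / wordProb π P (v ++ [x v.length])

structure IsMarkovCocycle (π : I → ℝ) (P : I → I → ℝ) (ρ : (ℕ → I) → (ℕ → I) → ℝ) : Prop where
  mul_eq : ∀ x y z, ShiftRel x y → ShiftRel y z → ρ x y * ρ y z = ρ x z
  apply_shift : ∀ x, ρ x (shift x) = π (x 0) / π (x 1) * P (x 0) (x 1)

namespace IsMarkovCocycle

variable {π : I → ℝ} {P : I → I → ℝ} {ρ : (ℕ → I) → (ℕ → I) → ℝ}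

/-- A zero `ρ(x, s x) = 0` propagates through the cocycle identity to the whole `E_s`-class of `x`,
whose points begin with arbitrary pairs of letters, forcing `P = 0`. -/
theorem transition_pos (hρ : IsMarkovCocycle π P ρ) (hπ : ∀ i, 0 < π i)
    (hP : ∀ i j, 0 ≤ P i j) (hrow : ∀ i, HasSum (P i) 1) (a b : I) : 0 < P a b := by
  refine (hP a b).lt_of_ne fun hab => ?_
  set x := prepend [a, b] fun _ => a
  have hx : ρ x (shift x) = 0 := by simp [hρ.apply_shift, x, prepend, ← hab]
  have hxx : ρ x x = 0 := by
    rw [← hρ.mul_eq x (shift x) x (shiftRel_shift x) (shiftRel_shift x).symm, hx, zero_mul]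
  have hzero : ∀ i j, P i j = 0 := by
    intro i j
    set y := prepend [i, j] x
    have hyx : ShiftRel y x := shiftRel_prepend _ _
    have hyx0 : ρ y x = 0 := by rw [← hρ.mul_eq y x x hyx (.refl x), hxx, mul_zero]
    have hyy : ρ y y = 0 := by rw [← hρ.mul_eq y x y hyx hyx.symm, hyx0, zero_mul]
    have hy : ρ y (shift y) = 0 := by
      rw [← hρ.mul_eq y y (shift y) (.refl y) (shiftRel_shift y), hyy, zero_mul]
    simpa [hρ.apply_shift, y, prepend, (hπ i).ne', (hπ j).ne'] using hy
  have hrow_a := hrow a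
  rw [show P a = 0 from funext (hzero a)] at hrow_a
  exact zero_ne_one (hasSum_zero.unique hrow_a)

theorem apply_self (hρ : IsMarkovCocycle π P ρ) (hπ : ∀ i, 0 < π i)
    (hP : ∀ i j, 0 < P i j) (z : ℕ → I) : ρ z z = 1 := by
  have hne : ρ z (shift z) ≠ 0 := by
    rw [hρ.apply_shift]
    exact (mul_pos (div_pos (hπ _) (hπ _)) (hP _ _)).ne'
  exact mul_right_cancel₀ hne (by rw [hρ.mul_eq z z _ (.refl z) (shiftRel_shift z), one_mul])

theorem apply_prepend_left (hρ : IsMarkovCocycle π P ρ) (hπ : ∀ i, 0 < π i)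
    (hP : ∀ i j, 0 < P i j) (u : List I) (z : ℕ → I) :
    ρ (prepend u z) z = wordProb π P (u ++ [z 0]) / π (z 0) := by
  induction u with
  | nil =>
    have hz : prepend [] z = z := by simpa using shift_iterate_prepend [] z
    rw [hz, hρ.apply_self hπ hP, List.nil_append, wordProb, chainP, mul_one,
      div_self (hπ _).ne']
  | cons a u ih =>
    set y := prepend u z
    obtain ⟨l, hl⟩ := exists_append_singleton_eq_cons u z
    have hstep : ρ (prepend [a] y) y = π a / π (y 0) * P a (y 0) := by
      have h := hρ.apply_shift (prepend [a] y)
      rw [show shift (prepend [a] y) = y from shift_iterate_prepend [a] y] at h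
      simpa [prepend] using h
    rw [List.cons_append, hl, wordProb_cons_cons (hπ _).ne', ← hl, mul_div_assoc, ← ih,
      ← hstep, ← List.singleton_append, prepend_append,
      hρ.mul_eq _ y _ (shiftRel_prepend _ _) (shiftRel_prepend _ _)]

theorem apply_prepend (hρ : IsMarkovCocycle π P ρ) (hπ : ∀ i, 0 < π i)
    (hP : ∀ i j, 0 < P i j) (u v : List I) (z : ℕ → I) :
    ρ (prepend u z) (prepend v z) = wordProb π P (u ++ [z 0]) / wordProb π P (v ++ [z 0]) := by
  have hv := shiftRel_prepend v z
  have hz := (hπ (z 0)).ne'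
  have hw := (wordProb_pos hπ hP (v ++ [z 0])).ne'
  have hinv : ρ z (prepend v z) = π (z 0) / wordProb π P (v ++ [z 0]) := by
    have h := hρ.mul_eq _ z _ hv hv.symm
    rw [hρ.apply_self hπ hP, hρ.apply_prepend_left hπ hP] at h
    field_simp at h
    rw [eq_div_iff hw, mul_comm, h]
  rw [← hρ.mul_eq _ z _ (shiftRel_prepend u z) hv.symm, hρ.apply_prepend_left hπ hP, hinv]
  field_simp

theorem apply_reprefix (hρ : IsMarkovCocycle π P ρ) (hπ : ∀ i, 0 < π i)
    (hP : ∀ i j, 0 < P i j) (v u : List I) {x : ℕ → I} (hx : x ∈ cyl v) :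
    ρ (reprefix v u x) x = reprefixDensity π P v u x := by
  conv_lhs => arg 2; rw [← prepend_shift_iterate hx]
  rw [reprefix, hρ.apply_prepend hπ hP, reprefixDensity, shift_iterate_apply, zero_add]

theorem pos_of_shiftRel (hρ : IsMarkovCocycle π P ρ) (hπ : ∀ i, 0 < π i)
    (hP : ∀ i j, 0 < P i j) {x y : ℕ → I} (h : ShiftRel y x) : 0 < ρ y x := by
  obtain ⟨n, m, h⟩ := h
  rw [← prepend_prefixWord_shift_iterate y n, ← prepend_prefixWord_shift_iterate x m, h,
    hρ.apply_prepend hπ hP]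
  exact div_pos (wordProb_pos hπ hP _) (wordProb_pos hπ hP _)

end IsMarkovCocycle

section ChangeOfVariables

variable {α β : Type*} [MeasurableSpace α] [MeasurableSpace β] {μ : Measure α} {ν : Measure β}
  {γ : α → β} {g : α → ℝ≥0∞} {D : Set α}

theorem measure_image_eq_setLIntegral_of_iUnion (hinj : Set.InjOn γ D) {E : ℕ → Set α}
    (hEm : ∀ k, MeasurableSet (E k)) (hED : ⋃ k, E k = D)
    (hloc : ∀ k A, MeasurableSet A → A ⊆ E k →
      MeasurableSet (γ '' A) ∧ ν (γ '' A) = ∫⁻ x in A, g x ∂μ)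
    {A : Set α} (hAm : MeasurableSet A) (hAD : A ⊆ D) :
    ν (γ '' A) = ∫⁻ x in A, g x ∂μ := by
  set F := fun k => A ∩ disjointed E k
  have hFE : ∀ k, F k ⊆ E k := fun k => Set.inter_subset_right.trans (disjointed_subset E k)
  have hFD : ∀ k, F k ⊆ D := fun k => Set.inter_subset_left.trans hAD
  have hFm : ∀ k, MeasurableSet (F k) := fun k => hAm.inter (.disjointed hEm k)
  have hF : Pairwise (Function.onFun Disjoint F) := fun i j hij =>
    (disjoint_disjointed E hij).mono Set.inter_subset_right Set.inter_subset_right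
  have hγF : Pairwise (Function.onFun Disjoint fun k => γ '' F k) := fun i j hij => by
    rw [Function.onFun, Set.disjoint_iff_inter_eq_empty, ← hinj.image_inter (hFD i) (hFD j),
      (hF hij).inter_eq, Set.image_empty]
  have hAF : A = ⋃ k, F k := by
    rw [← Set.inter_iUnion, iUnion_disjointed, hED, Set.inter_eq_left.2 hAD]
  rw [hAF, Set.image_iUnion, measure_iUnion hγF fun k => (hloc k _ (hFm k) (hFE k)).1,
    lintegral_iUnion hFm hF]
  exact tsum_congr fun k => (hloc k _ (hFm k) (hFE k)).2

theorem map_withDensity_restrict_eq_restrict_image (hγ : Measurable γ) (hD : MeasurableSet D)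
    (himage : ∀ A, MeasurableSet A → A ⊆ D → ν (γ '' A) = ∫⁻ x in A, g x ∂μ) :
    ((μ.restrict D).withDensity g).map γ = ν.restrict (γ '' D) := by
  ext B hB
  rw [Measure.map_apply hγ hB, withDensity_apply _ (hγ hB), Measure.restrict_restrict (hγ hB),
    Measure.restrict_apply hB, Set.inter_comm B, ← Set.image_inter_preimage, Set.inter_comm D,
    himage _ ((hγ hB).inter hD) Set.inter_subset_right]

theorem setIntegral_image_eq_of_map_withDensity {E : Type*} [NormedAddCommGroup E]
    [NormedSpace ℝ E] {r : α → ℝ} (hγ : Measurable γ) (hD : MeasurableSet D) (hr : Measurable r)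
    (hr0 : ∀ x ∈ D, 0 ≤ r x)
    (hmap : ((μ.restrict D).withDensity fun x => ENNReal.ofReal (r x)).map γ = ν.restrict (γ '' D))
    {f : β → E} (hf : AEStronglyMeasurable f (ν.restrict (γ '' D))) :
    ∫ y in γ '' D, f y ∂ν = ∫ x in D, r x • f (γ x) ∂μ := by
  rw [← hmap] at hf ⊢
  rw [integral_map hγ.aemeasurable hf]
  refine (integral_withDensity_eq_integral_smul hr.real_toNNReal _).trans
    (setIntegral_congr_fun hD fun x hx => ?_)
  rw [NNReal.smul_def, Real.coe_toNNReal _ (hr0 x hx)]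

end ChangeOfVariables

section MarkovMeasure

variable [MeasurableSpace I]

structure IsMarkovMeasure (π : I → ℝ) (P : I → I → ℝ) (ℙ : Measure (ℕ → I)) : Prop where
  pos_init : ∀ i, 0 < π i
  hasSum_init : HasSum π 1
  nonneg : ∀ i j, 0 ≤ P i j
  hasSum_row : ∀ i, HasSum (P i) 1
  measure_cyl : ∀ w, ℙ (cyl w) = ENNReal.ofReal (wordProb π P w)

variable {π : I → ℝ} {P : I → I → ℝ} {ℙ : Measure (ℕ → I)}

theorem IsMarkovMeasure.isProbabilityMeasure (hℙ : IsMarkovMeasure π P ℙ) :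
    IsProbabilityMeasure ℙ :=
  ⟨by rw [← cyl_nil, hℙ.measure_cyl]; simp [wordProb]⟩

variable [Countable I] [DiscreteMeasurableSpace I]

namespace IsMarkovMeasure

theorem setLIntegral_reprefixDensity_cyl_append_cons (hℙ : IsMarkovMeasure π P ℙ)
    (u v : List I) {j : I} (hv : 0 < wordProb π P (v ++ [j])) (t : List I) :
    ∫⁻ x in cyl (v ++ j :: t), ENNReal.ofReal (reprefixDensity π P v u x) ∂ℙ =
      ENNReal.ofReal (wordProb π P (u ++ j :: t)) := by
  have hconst : ∀ x ∈ cyl (v ++ j :: t),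
      reprefixDensity π P v u x = wordProb π P (u ++ [j]) / wordProb π P (v ++ [j]) := by
    intro x hx
    have hx' : x ∈ cyl (v ++ [j] ++ t) := by rwa [List.append_assoc]
    rw [reprefixDensity, (mem_cyl_append_singleton.1 (cyl_append_subset _ t hx')).2]
  rw [setLIntegral_congr_fun (measurableSet_cyl _) fun x hx => by rw [hconst x hx],
    setLIntegral_const, hℙ.measure_cyl,
    ← ENNReal.ofReal_mul' (wordProb_nonneg (fun i => (hℙ.pos_init i).le) hℙ.nonneg _),
    wordProb_append_cons v j t, wordProb_append_cons u j t]
  congr 1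
  field_simp

theorem setLIntegral_reprefixDensity_cyl_append (hℙ : IsMarkovMeasure π P ℙ) (u : List I)
    {v : List I} (hv : ∀ j, 0 < wordProb π P (v ++ [j])) :
    ∀ t : List I, ∫⁻ x in cyl (v ++ t), ENNReal.ofReal (reprefixDensity π P v u x) ∂ℙ =
      ENNReal.ofReal (wordProb π P (u ++ t))
  | j :: t => hℙ.setLIntegral_reprefixDensity_cyl_append_cons u v (hv j) t
  | [] => by
    have hsum := hasSum_wordProb_append_singleton hℙ.hasSum_init hℙ.hasSum_row u
    rw [List.append_nil, List.append_nil, cyl_eq_iUnion_cyl_append_singleton,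
      lintegral_iUnion (fun j => measurableSet_cyl _) (pairwise_disjoint_cyl_append_singleton v),
      ← hsum.tsum_eq, ENNReal.ofReal_tsum_of_nonneg
        (fun j => wordProb_nonneg (fun i => (hℙ.pos_init i).le) hℙ.nonneg _) hsum.summable]
    exact tsum_congr fun j => hℙ.setLIntegral_reprefixDensity_cyl_append_cons u v (hv j) []

theorem map_reprefix_restrict_cyl (hℙ : IsMarkovMeasure π P ℙ) (u : List I) {v : List I}
    (hv : ∀ j, 0 < wordProb π P (v ++ [j])) :
    (ℙ.restrict (cyl u)).map (reprefix u v) =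
      (ℙ.restrict (cyl v)).withDensity fun x => ENNReal.ofReal (reprefixDensity π P v u x) := by
  have := hℙ.isProbabilityMeasure
  have hcyl : ∀ w, (ℙ.restrict (cyl u)).map (reprefix u v) (cyl w) =
      (ℙ.restrict (cyl v)).withDensity (fun x => ENNReal.ofReal (reprefixDensity π P v u x))
        (cyl w) := by
    intro w
    have hpre : reprefix u v ⁻¹' cyl w ∩ cyl u = cyl u ∩ reprefix u v ⁻¹' (cyl v ∩ cyl w) := by
      ext y
      simp only [Set.mem_inter_iff, Set.mem_preimage, reprefix_mem_cyl, true_and, and_comm]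
    rw [Measure.map_apply (measurable_reprefix u v) (measurableSet_cyl w),
      Measure.restrict_apply (measurable_reprefix u v (measurableSet_cyl w)),
      withDensity_apply _ (measurableSet_cyl w), Measure.restrict_restrict (measurableSet_cyl w),
      hpre, Set.inter_comm (cyl w)]
    rcases cyl_inter_cyl v w with h | ⟨t, h⟩
    · simp [h]
    · rw [h, cyl_inter_preimage_reprefix_cyl_append, hℙ.measure_cyl,
        hℙ.setLIntegral_reprefixDensity_cyl_append u hv]
  refine ext_of_generate_finite _ pi_eq_generateFrom_range_cyl isPiSystem_range_cyl ?_ ?_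
  · rintro _ ⟨w, rfl⟩
    exact hcyl w
  · rw [← cyl_nil]
    exact hcyl []

theorem measure_image_reprefix (hℙ : IsMarkovMeasure π P ℙ) (u : List I) {v : List I}
    (hv : ∀ j, 0 < wordProb π P (v ++ [j])) {A : Set (ℕ → I)} (hAm : MeasurableSet A)
    (hA : A ⊆ cyl v) :
    MeasurableSet (reprefix v u '' A) ∧
      ℙ (reprefix v u '' A) = ∫⁻ x in A, ENNReal.ofReal (reprefixDensity π P v u x) ∂ℙ := by
  have hpre : MeasurableSet (reprefix u v ⁻¹' A) := measurable_reprefix u v hAm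
  rw [image_reprefix hA]
  refine ⟨(measurableSet_cyl u).inter hpre, ?_⟩
  calc ℙ (cyl u ∩ reprefix u v ⁻¹' A)
      = (ℙ.restrict (cyl u)).map (reprefix u v) A := by
        rw [Measure.map_apply (measurable_reprefix u v) hAm, Measure.restrict_apply hpre,
          Set.inter_comm]
    _ = ∫⁻ x in A, ENNReal.ofReal (reprefixDensity π P v u x) ∂ℙ := by
        rw [hℙ.map_reprefix_restrict_cyl u hv, withDensity_apply _ hAm,
          Measure.restrict_restrict hAm, Set.inter_eq_left.2 hA]

theorem measure_cyl_cons_eq_integral (hℙ : IsMarkovMeasure π P ℙ) (i : I) (w : List I) :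
    (ℙ (cyl (i :: w))).toReal = ∫ x in cyl w, (π i / π (x 0)) * P i (x 0) ∂ℙ := by
  have hdens : ∀ x, reprefixDensity π P [] [i] x = π i / π (x 0) * P i (x 0) := fun x => by
    simp only [reprefixDensity, List.singleton_append, List.nil_append, List.length_nil, wordProb,
      chainP]
    ring
  have hL := hℙ.setLIntegral_reprefixDensity_cyl_append [i] (v := [])
    (fun j => by simpa [wordProb, chainP] using hℙ.pos_init j) w
  simp only [List.nil_append, List.singleton_append, hdens] at hL
  rw [integral_eq_lintegral_of_nonneg_ae
      (ae_of_all _ fun x => mul_nonneg (div_nonneg (hℙ.pos_init i).le (hℙ.pos_init _).le)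
        (hℙ.nonneg _ _))
      ((Measurable.of_discrete (f := fun j => π i / π j * P i j)).comp
        (measurable_pi_apply 0)).aestronglyMeasurable,
    hL, hℙ.measure_cyl]

variable {ρ : (ℕ → I) → (ℕ → I) → ℝ}

/-- `D` is covered by the countably many pieces on which `γ = reprefix v u`. -/
theorem measure_image_eq_setLIntegral_cocycle (hℙ : IsMarkovMeasure π P ℙ)
    (hρ : IsMarkovCocycle π P ρ) {γ : (ℕ → I) → ℕ → I} {D : Set (ℕ → I)} (hγ : Measurable γ)
    (hD : MeasurableSet D) (hinj : Set.InjOn γ D) (hγD : ∀ x ∈ D, ShiftRel (γ x) x)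
    {A : Set (ℕ → I)} (hA : MeasurableSet A) (hAD : A ⊆ D) :
    ℙ (γ '' A) = ∫⁻ x in A, ENNReal.ofReal (ρ (γ x) x) ∂ℙ := by
  have hP := hρ.transition_pos hℙ.pos_init hℙ.nonneg hℙ.hasSum_row
  let piece : List I × List I → Set (ℕ → I) := fun vu =>
    D ∩ cyl vu.1 ∩ {x | γ x = reprefix vu.1 vu.2 x}
  have hpiece : ∀ v u B, MeasurableSet B → B ⊆ piece (v, u) →
      MeasurableSet (γ '' B) ∧ ℙ (γ '' B) = ∫⁻ x in B, ENNReal.ofReal (ρ (γ x) x) ∂ℙ := by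
    intro v u B hB hBvu
    have hBv : B ⊆ cyl v := fun x hx => (hBvu hx).1.2
    rw [Set.image_congr fun x hx => (hBvu hx).2, setLIntegral_congr_fun hB fun x hx => by
      rw [(hBvu hx).2, hρ.apply_reprefix hℙ.pos_init hP v u (hBv hx)]]
    exact hℙ.measure_image_reprefix u (fun j => wordProb_pos hℙ.pos_init hP _) hB hBv
  obtain ⟨e, he⟩ := exists_surjective_nat (List I × List I)
  refine measure_image_eq_setLIntegral_of_iUnion hinj (E := piece ∘ e)
    (fun k => (hD.inter (measurableSet_cyl _)).inter
      (measurableSet_eq_fun hγ (measurable_reprefix _ _))) ?_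
    (fun k => hpiece (e k).1 (e k).2) hA hAD
  refine (Set.iUnion_subset fun k => Set.inter_subset_left.trans Set.inter_subset_left).antisymm
    fun x hx => ?_
  obtain ⟨n, m, h⟩ := hγD x hx
  obtain ⟨k, hk⟩ := he (prefixWord x m, prefixWord (γ x) n)
  refine Set.mem_iUnion.2 ⟨k, ⟨hx, ?_⟩, ?_⟩
  · show x ∈ cyl (e k).1
    rw [hk]
    exact prefixWord_mem_cyl x m
  · show γ x = reprefix (e k).1 (e k).2 x
    rw [hk, reprefix, length_prefixWord, ← h, prepend_prefixWord_shift_iterate]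

theorem setIntegral_image_eq_cocycle (hℙ : IsMarkovMeasure π P ℙ) (hρ : IsMarkovCocycle π P ρ)
    (hρm : Measurable (Function.uncurry ρ)) {γ : (ℕ → I) → ℕ → I} {D : Set (ℕ → I)}
    (hγ : Measurable γ) (hD : MeasurableSet D) (hinj : Set.InjOn γ D)
    (hγD : ∀ x ∈ D, ShiftRel (γ x) x) {f : (ℕ → I) → ℝ} (hf : AEStronglyMeasurable f ℙ) :
    ∫ x in γ '' D, f x ∂ℙ = ∫ x in D, ρ (γ x) x * f (γ x) ∂ℙ := by
  have hP := hρ.transition_pos hℙ.pos_init hℙ.nonneg hℙ.hasSum_row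
  have hmap := map_withDensity_restrict_eq_restrict_image hγ hD fun A hA hAD =>
    hℙ.measure_image_eq_setLIntegral_cocycle hρ hγ hD hinj hγD hA hAD
  simpa only [smul_eq_mul] using setIntegral_image_eq_of_map_withDensity
    (r := fun x => ρ (γ x) x) hγ hD (hρm.comp (hγ.prodMk measurable_id))
    (fun x hx => (hρ.pos_of_shiftRel hℙ.pos_init hP (hγD x hx)).le) hmap hf.restrict

end IsMarkovMeasure

end MarkovMeasure

end MarkovShift

/-- **The Radon–Nikodym cocycle of a Markov chain.**  The displayed integral identity
holds on cylinders, and consequently every cocycle on `E_s` generated by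
`ρ(x, s(x)) = (π(x_0)/π(x_1)) P(x_0, x_1)` satisfies the Radon–Nikodym
change-of-variables formula with respect to `ℙ`. -/
theorem markov_radon_nikodym_cocycle
    {I : Type*} [Countable I] [MeasurableSpace I] [DiscreteMeasurableSpace I]
    (π : I → ℝ) (P : I → I → ℝ)
    (hπpos : ∀ i, 0 < π i) (hπsum : HasSum π 1)
    (hPnonneg : ∀ i j, 0 ≤ P i j) (hProw : ∀ i, HasSum (P i) 1)
    (ℙ : Measure (ℕ → I))
    (hℙ : ∀ w : List I, ℙ (cyl w) = ENNReal.ofReal (wordProb π P w)) :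
    (∀ (i : I) (w : List I),
      (ℙ (cyl (i :: w))).toReal =
        ∫ x in cyl w, (π i / π (x 0)) * P i (x 0) ∂ℙ) ∧
    ∀ ρ : (ℕ → I) → (ℕ → I) → ℝ, Measurable (Function.uncurry ρ) →
      (∀ x y z, ShiftRel x y → ShiftRel y z → ρ x y * ρ y z = ρ x z) →
      (∀ x, ρ x (shift x) = π (x 0) / π (x 1) * P (x 0) (x 1)) →
      ∀ (γ : (ℕ → I) → ℕ → I) (D : Set (ℕ → I)), Measurable γ → MeasurableSet D →
        Set.InjOn γ D → (∀ x ∈ D, ShiftRel (γ x) x) →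
        ∀ f : (ℕ → I) → ℝ, Integrable f ℙ →
          ∫ x in γ '' D, f x ∂ℙ = ∫ x in D, ρ (γ x) x * f (γ x) ∂ℙ := by
  have hMarkov : MarkovShift.IsMarkovMeasure π P ℙ := ⟨hπpos, hπsum, hPnonneg, hProw, hℙ⟩
  refine ⟨hMarkov.measure_cyl_cons_eq_integral, fun ρ hρm hcoc hρ γ D hγ hD hinj hγD f hf => ?_⟩
  exact hMarkov.setIntegral_image_eq_cocycle ⟨hcoc, hρ⟩ hρm hγ hD hinj hγD hf.aestronglyMeasurable
end

section
/- Ergodicity of irreducible recurrent Markov chains: Let I be a countable set, π a probability vector on I with π(i) > 0 for all i, P an I×I stochastic matrix, and ℙ the Borel probability measure on I^ℕ determined by ℙ([w]) = π(w_0)P(w_0,w_1)⋯P(w_{n−2},w_{n−1}) on cylinders. For i ∈ I let ℙ_i := (1/π(i)) · ℙ↾[i], and let τ_j(x) be the least n ≥ 1 with x_n = j (τ_j(x) = ∞ if none exists). Suppose the chain is irreducible (ℙ_i[τ_j < ∞] > 0 for all i,j ∈ I) and has a recurrent state (some i ∈ I with ℙ_i[τ_i < ∞] = 1). Then ℙ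 is ergodic with respect to the shift s: every Borel set A ⊆ I^ℕ with s⁻¹(A) = A satisfies ℙ(A) ∈ {0, 1}. -/
/-!
Recurrence of `i₀` spreads to every state `j`: if the chain started at `j` missed `i₀` with
positive probability, then the excursions from `i₀` that visit `j` before returning, which have
positive probability by irreducibility, would escape `i₀` with positive probability. Cutting paths
at their first visit to `i₀`, the Markov property then gives `ℙ_j(A) = ℙ_{i₀}(A) =: c` for every
shift-invariant `A` and every `j`, hence `ℙ(A ∩ [w]) = c ℙ([w])` for every cylinder, i.e.
`ℙ↾A = c • ℙ`; evaluating at `A` and at the whole space gives `c = c²`.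
-/

open MeasureTheory

/-- `ℙ_i = (1/π(i)) · ℙ↾[i]`, the chain started at state `i`. -/
noncomputable def chainStart {I : Type*} [MeasurableSpace I] (π : I → ℝ)
    (ℙ : Measure (ℕ → I)) (i : I) : Measure (ℕ → I) :=
  (ENNReal.ofReal (π i))⁻¹ • ℙ.restrict (cyl [i])

/-- The event `τ_j < ∞`: some coordinate `x_n`, `n ≥ 1`, equals `j`. -/
def hitsState {I : Type*} (j : I) : Set (ℕ → I) := {x | ∃ n : ℕ, 1 ≤ n ∧ x n = j}

open Function

section Cylinders

variable {I : Type*}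

lemma shift_iterate_apply (x : ℕ → I) (n m : ℕ) : shift^[n] x m = x (m + n) := by
  induction n generalizing x with
  | zero => rfl
  | succ n ih => rw [iterate_succ_apply, ih]; rfl

lemma mem_cyl_iff {x : ℕ → I} {w : List I} :
    x ∈ cyl w ↔ ∀ k (h : k < w.length), x k = w[k] :=
  ⟨fun hx k h => hx ⟨k, h⟩, fun hx k => hx k k.isLt⟩

lemma cyl_nil : cyl ([] : List I) = Set.univ := by
  ext x; simp [mem_cyl_iff]

lemma cyl_cons (a : I) (w : List I) :
    cyl (a :: w) = {x : ℕ → I | x 0 = a} ∩ shift ⁻¹' cyl w := by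
  ext x
  simp only [Set.mem_inter_iff, Set.mem_ofPred_eq, Set.mem_preimage, mem_cyl_iff,
    List.length_cons, shift]
  constructor
  · intro h
    exact ⟨h 0 (Nat.succ_pos _), fun k hk => h (k + 1) (Nat.succ_lt_succ hk)⟩
  · rintro ⟨h0, h⟩ (_ | k) hk
    · exact h0
    · exact h k (Nat.succ_lt_succ_iff.1 hk)

lemma cyl_singleton (a : I) : cyl [a] = {x : ℕ → I | x 0 = a} := by
  rw [cyl_cons, cyl_nil, Set.preimage_univ, Set.inter_univ]

lemma cyl_append (u v : List I) :
    cyl (u ++ v) = cyl u ∩ shift^[u.length] ⁻¹' cyl v := by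
  induction u with
  | nil => rw [List.nil_append, cyl_nil, Set.univ_inter]; rfl
  | cons a u ih =>
    rw [List.cons_append, cyl_cons, ih, cyl_cons, List.length_cons, iterate_succ,
      Set.preimage_comp, Set.preimage_inter, Set.inter_assoc]

lemma cyl_cons_subset (a : I) (w : List I) : cyl (a :: w) ⊆ cyl [a] := by
  rw [cyl_cons, cyl_singleton]; exact Set.inter_subset_left

lemma List.IsPrefix.cyl_subset {u v : List I} (h : u <+: v) : cyl v ⊆ cyl u := by
  obtain ⟨r, rfl⟩ := h
  rw [cyl_append]
  exact Set.inter_subset_left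

lemma isPrefix_of_mem_cyl {x : ℕ → I} {u v : List I} (hu : x ∈ cyl u) (hv : x ∈ cyl v)
    (h : u.length ≤ v.length) : u <+: v := by
  rw [List.prefix_iff_eq_take]
  refine List.ext_getElem (by simp [h]) fun k hk _ => ?_
  rw [List.getElem_take, ← mem_cyl_iff.1 hu k hk, mem_cyl_iff.1 hv]

lemma pairwise_disjoint_cyl_singleton : Pairwise (Disjoint on fun a : I => cyl [a]) := by
  intro a b hab
  simp only [onFun, cyl_singleton, Set.disjoint_left, Set.mem_ofPred_eq]
  rintro x rfl rfl
  exact hab rfl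

lemma cyl_append_singleton_inter_preimage (w : List I) (a : I) (v : List I) :
    cyl (w ++ [a]) ∩ shift^[w.length] ⁻¹' cyl (a :: v) = cyl (w ++ a :: v) := by
  rw [cyl_append w [a], Set.inter_assoc, ← Set.preimage_inter,
    Set.inter_eq_right.2 (cyl_cons_subset a v), ← cyl_append]

lemma disjoint_cyl_append_singleton_preimage {a b : I} (hab : b ≠ a) (w v : List I) :
    Disjoint (cyl (w ++ [a])) (shift^[w.length] ⁻¹' cyl (b :: v)) := by
  rw [cyl_append]
  exact (((pairwise_disjoint_cyl_singleton hab.symm).mono_right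
    (cyl_cons_subset b v)).preimage _).mono_left Set.inter_subset_right

lemma iUnion_cyl_singleton : ⋃ a : I, cyl [a] = Set.univ :=
  Set.eq_univ_of_forall fun x => Set.mem_iUnion.2 ⟨x 0, by rw [cyl_singleton]; rfl⟩

lemma mem_cyl_cons_append_singleton {x : ℕ → I} {a b : I} {t : List I} :
    x ∈ cyl (a :: (t ++ [b])) ↔
      x 0 = a ∧ (∀ m (h : m < t.length), x (m + 1) = t[m]) ∧ x (t.length + 1) = b := by
  rw [cyl_cons, cyl_append, cyl_singleton]
  simp [mem_cyl_iff, shift_iterate_apply, shift]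

lemma mem_hitsState_shift_iterate {x : ℕ → I} {n : ℕ} {j : I} :
    shift^[n] x ∈ hitsState j ↔ ∃ m, n < m ∧ x m = j := by
  simp only [hitsState, Set.mem_ofPred_eq, shift_iterate_apply]
  constructor
  · rintro ⟨k, hk, hx⟩
    exact ⟨k + n, by omega, hx⟩
  · rintro ⟨m, hm, hx⟩
    exact ⟨m - n, by omega, by rwa [Nat.sub_add_cancel hm.le]⟩

lemma preimage_shift_iterate_of_invariant {A : Set (ℕ → I)} (hA : shift ⁻¹' A = A) (n : ℕ) :
    shift^[n] ⁻¹' A = A := by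
  rw [Set.preimage_iterate_eq]
  exact iterate_fixed hA n

end Cylinders

section FirstPassage

variable {I : Type*}

lemma eq_of_append_singleton_prefix {t t' : List I} {e : I} (h : t ++ [e] <+: t' ++ [e])
    (he : e ∉ t') : t = t' := by
  have hlen : t.length ≤ t'.length := by simpa using h.length_le
  rcases hlen.lt_or_eq with hlt | heq
  · refine absurd ?_ he
    have := h.getElem (i := t.length) (by simp)
    rw [List.getElem_append_right le_rfl, List.getElem_append_left hlt] at this
    simpa [← this] using t'.getElem_mem hlt
  · exact List.append_cancel_right (h.eq_of_length (by simp [heq]))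

lemma pairwise_disjoint_cyl_firstPassage {a e : I} {Q : List I → Prop} (hQ : ∀ t, Q t → e ∉ t) :
    Pairwise (Disjoint on fun t : Subtype Q => cyl (a :: (t.1 ++ [e]))) := by
  intro t t' hne
  refine Set.disjoint_left.2 fun x hx hx' => hne (Subtype.ext ?_)
  rcases le_total t.1.length t'.1.length with hl | hl
  · exact eq_of_append_singleton_prefix
      (List.cons_prefix_cons.1 (isPrefix_of_mem_cyl hx hx' (by simpa))).2 (hQ _ t'.2)
  · exact (eq_of_append_singleton_prefix
      (List.cons_prefix_cons.1 (isPrefix_of_mem_cyl hx' hx (by simpa))).2 (hQ _ t.2)).symm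

lemma cyl_singleton_inter_hitsState (a e : I) :
    cyl [a] ∩ hitsState e = ⋃ t : {t : List I // e ∉ t}, cyl (a :: (t.1 ++ [e])) := by
  classical
  ext x
  simp only [Set.mem_inter_iff, Set.mem_iUnion, mem_cyl_cons_append_singleton, cyl_singleton,
    Set.mem_ofPred_eq]
  constructor
  · rintro ⟨hx0, hhit⟩
    have hfind := Nat.find_spec hhit
    refine ⟨⟨List.ofFn fun k : Fin (Nat.find hhit - 1) => x (k + 1), fun he => ?_⟩,
      hx0, fun m hm => by simp, by simpa [Nat.sub_add_cancel hfind.1] using hfind.2⟩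
    obtain ⟨k, hk⟩ := List.mem_ofFn.1 he
    exact Nat.find_min hhit (by omega : (k : ℕ) + 1 < Nat.find hhit) ⟨by omega, hk⟩
  · rintro ⟨t, hx0, -, hxe⟩
    exact ⟨hx0, t.1.length + 1, by omega, hxe⟩

def visitsBeforeReturn (i j : I) : Set (ℕ → I) :=
  ⋃ t : {t : List I // j ∉ t ∧ i ∉ t}, cyl (i :: (t.1 ++ [j]))

lemma hitsState_subset_visitsBeforeReturn_compl_union {i j : I} (hji : j ≠ i) :
    hitsState i ⊆ (visitsBeforeReturn i j)ᶜ ∪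
      ⋃ t : {t : List I // j ∉ t ∧ i ∉ t},
        cyl (i :: (t.1 ++ [j])) ∩ shift^[t.1.length + 1] ⁻¹' hitsState i := by
  rintro x ⟨m, hm, hxm⟩
  by_cases hxV : x ∈ visitsBeforeReturn i j
  · obtain ⟨t, hxt⟩ := Set.mem_iUnion.1 hxV
    refine Or.inr (Set.mem_iUnion.2 ⟨t, hxt, mem_hitsState_shift_iterate.2 ⟨m, ?_, hxm⟩⟩)
    rw [mem_cyl_cons_append_singleton] at hxt
    by_contra! hle
    rcases hle.lt_or_eq with hlt | rfl
    · have hxt' := hxt.2.1 (m - 1) (by omega)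
      rw [Nat.sub_add_cancel hm, hxm] at hxt'
      exact t.2.2 (List.mem_of_getElem hxt'.symm)
    · exact hji (hxt.2.2.symm.trans hxm)
  · exact Or.inl hxV

end FirstPassage

section Measurability

variable {I : Type*}

lemma isPiSystem_cyl : IsPiSystem {S : Set (ℕ → I) | ∃ w : List I, S = cyl w} := by
  rintro _ ⟨u, rfl⟩ _ ⟨v, rfl⟩ ⟨x, hxu, hxv⟩
  rcases le_total u.length v.length with hl | hl
  · exact ⟨v, Set.inter_eq_right.2 (isPrefix_of_mem_cyl hxu hxv hl).cyl_subset⟩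
  · exact ⟨u, Set.inter_eq_left.2 (isPrefix_of_mem_cyl hxv hxu hl).cyl_subset⟩

lemma preimage_eval_singleton_eq_iUnion_cyl (n : ℕ) (j : I) :
    (fun x : ℕ → I => x n) ⁻¹' {j} = ⋃ w : Fin n → I, cyl (List.ofFn w ++ [j]) := by
  ext x
  simp only [Set.mem_preimage, Set.mem_singleton_iff, Set.mem_iUnion, cyl_append,
    Set.mem_inter_iff, mem_cyl_iff, List.length_ofFn, List.getElem_ofFn, Set.mem_preimage,
    List.length_singleton, Nat.lt_one_iff, forall_eq, List.getElem_singleton,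
    shift_iterate_apply, zero_add]
  exact ⟨fun hx => ⟨fun k => x k, fun _ _ => rfl, hx⟩, fun ⟨_, _, hx⟩ => hx⟩

variable [MeasurableSpace I]

lemma measurable_shift : Measurable (shift (I := I)) :=
  measurable_pi_lambda _ fun n => measurable_pi_apply (n + 1)

variable [DiscreteMeasurableSpace I]

lemma measurableSet_cyl (w : List I) : MeasurableSet (cyl w) := by
  simp only [cyl, Set.ofPred_forall]
  exact .iInter fun k => measurable_pi_apply _ (.singleton _)

lemma measurableSet_hitsState (j : I) : MeasurableSet (hitsState j) := by
  have : hitsState j = ⋃ n : ℕ, ⋃ _ : 1 ≤ n, (fun x : ℕ → I => x n) ⁻¹' {j} := by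
    ext x; simp [hitsState]
  rw [this]
  exact .iUnion fun n => .iUnion fun _ => measurable_pi_apply n (.singleton j)

variable [Countable I]

lemma generateFrom_cyl :
    (MeasurableSpace.pi : MeasurableSpace (ℕ → I)) =
      MeasurableSpace.generateFrom {S : Set (ℕ → I) | ∃ w : List I, S = cyl w} := by
  refine le_antisymm (iSup_le fun n => measurable_iff_comap_le.1 ?_)
    (MeasurableSpace.generateFrom_le fun _ ⟨w, hw⟩ => hw ▸ measurableSet_cyl w)
  refine @measurable_to_countable' I _ _ _ (_) _ fun j => ?_
  rw [preimage_eval_singleton_eq_iUnion_cyl]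
  exact .iUnion fun w => MeasurableSpace.measurableSet_generateFrom ⟨_, rfl⟩

lemma measure_univ_eq_tsum_cyl_singleton (μ : Measure (ℕ → I)) :
    μ Set.univ = ∑' a, μ (cyl [a]) := by
  rw [← iUnion_cyl_singleton, measure_iUnion pairwise_disjoint_cyl_singleton
    fun a => measurableSet_cyl _]

lemma measure_ext_cyl {μ ν : Measure (ℕ → I)} [IsFiniteMeasure μ]
    (h : ∀ w ≠ [], μ (cyl w) = ν (cyl w)) : μ = ν := by
  have huniv : μ Set.univ = ν Set.univ := by
    rw [measure_univ_eq_tsum_cyl_singleton μ, measure_univ_eq_tsum_cyl_singleton ν]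
    exact tsum_congr fun a => h [a] (List.cons_ne_nil a [])
  refine ext_of_generate_finite _ generateFrom_cyl isPiSystem_cyl ?_ huniv
  rintro _ ⟨w, rfl⟩
  rcases eq_or_ne w [] with rfl | hw
  · rwa [cyl_nil]
  · exact h w hw

end Measurability

section ChainAlgebra

variable {I : Type*} {P : I → I → ℝ}

lemma chainP_nonneg (hP : ∀ i j, 0 ≤ P i j) : ∀ w : List I, 0 ≤ chainP P w
  | [] | [_] => zero_le_one
  | a :: b :: w => mul_nonneg (hP a b) (chainP_nonneg hP (b :: w))

lemma wordProb_nonneg (π : I → ℝ) (hπ : ∀ i, 0 ≤ π i) (hP : ∀ i j, 0 ≤ P i j) :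
    ∀ w : List I, 0 ≤ wordProb π P w
  | [] => zero_le_one
  | a :: w => mul_nonneg (hπ a) (chainP_nonneg hP (a :: w))

lemma chainP_append (a : I) (v : List I) :
    ∀ w : List I, chainP P (w ++ a :: v) = chainP P (w ++ [a]) * chainP P (a :: v)
  | [] => (one_mul _).symm
  | [c] => by
    change P c a * _ = P c a * 1 * _
    rw [mul_one]
  | c :: d :: w => by
    change P c d * chainP P (d :: w ++ a :: v) = P c d * chainP P (d :: w ++ [a]) * _
    rw [chainP_append a v (d :: w), mul_assoc]

lemma wordProb_append (π : I → ℝ) (a : I) (v w : List I) :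
    wordProb π P (w ++ a :: v) = wordProb π P (w ++ [a]) * chainP P (a :: v) := by
  cases w with
  | nil =>
    change π a * _ = π a * 1 * _
    rw [mul_one]
  | cons c w =>
    change π c * chainP P (c :: w ++ a :: v) = π c * chainP P (c :: w ++ [a]) * _
    rw [chainP_append, mul_assoc]

lemma exists_chainP_pos_not_mem (hP : ∀ i j, 0 ≤ P i j) {i j : I} (t : List I) (hj : j ∉ t)
    (ht : 0 < chainP P (i :: (t ++ [j]))) :
    ∃ t' : List I, j ∉ t' ∧ i ∉ t' ∧ 0 < chainP P (i :: (t' ++ [j])) := by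
  by_cases hi : i ∈ t
  · obtain ⟨t₁, t₂, rfl⟩ := List.append_of_mem hi
    have hsplit : i :: (t₁ ++ i :: t₂ ++ [j]) = (i :: t₁) ++ i :: (t₂ ++ [j]) := by simp
    rw [hsplit, chainP_append] at ht
    exact exists_chainP_pos_not_mem hP t₂ (by simp_all)
      (pos_of_mul_pos_right ht (chainP_nonneg hP _))
  · exact ⟨t, hj, hi, ht⟩
termination_by t.length
decreasing_by subst_vars; simp only [List.length_append, List.length_cons]; omega

end ChainAlgebra

section Markov

variable {I : Type*} [MeasurableSpace I] {π : I → ℝ} {P : I → I → ℝ} {ℙ : Measure (ℕ → I)}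

lemma isProbabilityMeasure_of_cyl
    (hℙ : ∀ w : List I, ℙ (cyl w) = ENNReal.ofReal (wordProb π P w)) :
    IsProbabilityMeasure ℙ :=
  ⟨by rw [← cyl_nil, hℙ, wordProb, ENNReal.ofReal_one]⟩

variable [DiscreteMeasurableSpace I]

lemma chainStart_apply_of_subset {a : I} {S : Set (ℕ → I)} (hS : S ⊆ cyl [a]) :
    chainStart π ℙ a S = (ENNReal.ofReal (π a))⁻¹ * ℙ S := by
  rw [chainStart, Measure.smul_apply, Measure.restrict_apply' (measurableSet_cyl _),
    Set.inter_eq_left.2 hS, smul_eq_mul]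

lemma chainStart_cyl_singleton_inter (a : I) (S : Set (ℕ → I)) :
    chainStart π ℙ a (cyl [a] ∩ S) = chainStart π ℙ a S := by
  simp only [chainStart, Measure.smul_apply, Measure.restrict_apply' (measurableSet_cyl _),
    Set.inter_comm (cyl [a]), Set.inter_assoc, Set.inter_self]

lemma chainStart_cyl_cons_of_ne {a b : I} (hab : b ≠ a) (v : List I) :
    chainStart π ℙ a (cyl (b :: v)) = 0 := by
  rw [← chainStart_cyl_singleton_inter, ((pairwise_disjoint_cyl_singleton hab.symm).mono_right
    (cyl_cons_subset b v)).inter_eq, measure_empty]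

variable (hπpos : ∀ i, 0 < π i) (hPnonneg : ∀ i j, 0 ≤ P i j)
  (hℙ : ∀ w : List I, ℙ (cyl w) = ENNReal.ofReal (wordProb π P w))

include hπpos hℙ in
lemma chainStart_cyl_cons (a : I) (v : List I) :
    chainStart π ℙ a (cyl (a :: v)) = ENNReal.ofReal (chainP P (a :: v)) := by
  rw [chainStart_apply_of_subset (cyl_cons_subset a v), hℙ, wordProb,
    ENNReal.ofReal_mul (hπpos a).le, ← mul_assoc,
    ENNReal.inv_mul_cancel (ENNReal.ofReal_pos.2 (hπpos a)).ne' ENNReal.ofReal_ne_top, one_mul]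

include hπpos hℙ in
lemma isProbabilityMeasure_chainStart (a : I) : IsProbabilityMeasure (chainStart π ℙ a) :=
  ⟨by rw [← chainStart_cyl_singleton_inter, Set.inter_univ, chainStart_cyl_cons hπpos hℙ,
    chainP, ENNReal.ofReal_one]⟩

variable [Countable I]

lemma measurableSet_visitsBeforeReturn (i j : I) : MeasurableSet (visitsBeforeReturn i j) :=
  .iUnion fun _ => measurableSet_cyl _

include hπpos hPnonneg hℙ in
lemma map_shift_iterate_restrict_cyl (w : List I) (a : I) :
    (ℙ.restrict (cyl (w ++ [a]))).map shift^[w.length] =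
      ℙ (cyl (w ++ [a])) • chainStart π ℙ a := by
  have hmeas := (measurable_shift (I := I)).iterate w.length
  have := isProbabilityMeasure_of_cyl hℙ
  refine measure_ext_cyl fun v hv => ?_
  obtain ⟨b, v, rfl⟩ := List.exists_cons_of_ne_nil hv
  rw [Measure.map_apply hmeas (measurableSet_cyl _),
    Measure.restrict_apply (hmeas (measurableSet_cyl _)), Measure.smul_apply, smul_eq_mul,
    Set.inter_comm]
  rcases eq_or_ne b a with rfl | hab
  · rw [cyl_append_singleton_inter_preimage, hℙ, hℙ, wordProb_append,
      ENNReal.ofReal_mul (wordProb_nonneg π (fun i => (hπpos i).le) hPnonneg _),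
      chainStart_cyl_cons hπpos hℙ]
  · rw [(disjoint_cyl_append_singleton_preimage hab w v).inter_eq, measure_empty,
      chainStart_cyl_cons_of_ne hab, mul_zero]

include hπpos hPnonneg hℙ in
lemma measure_cyl_inter_preimage_shift_iterate (w : List I) (a : I) {B : Set (ℕ → I)}
    (hB : MeasurableSet B) :
    ℙ (cyl (w ++ [a]) ∩ shift^[w.length] ⁻¹' B) = ℙ (cyl (w ++ [a])) * chainStart π ℙ a B := by
  have hmeas := (measurable_shift (I := I)).iterate w.length
  rw [Set.inter_comm, ← Measure.restrict_apply (hmeas hB), ← Measure.map_apply hmeas hB,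
    map_shift_iterate_restrict_cyl hπpos hPnonneg hℙ, Measure.smul_apply, smul_eq_mul]

include hπpos hPnonneg hℙ in
lemma chainStart_cyl_inter_preimage_shift_iterate (a b : I) (u : List I) {B : Set (ℕ → I)}
    (hB : MeasurableSet B) :
    chainStart π ℙ a (cyl (a :: (u ++ [b])) ∩ shift^[u.length + 1] ⁻¹' B) =
      chainStart π ℙ a (cyl (a :: (u ++ [b]))) * chainStart π ℙ b B := by
  rw [chainStart_apply_of_subset (Set.inter_subset_left.trans (cyl_cons_subset _ _)),
    chainStart_apply_of_subset (cyl_cons_subset _ _), mul_assoc]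
  congr 1
  exact measure_cyl_inter_preimage_shift_iterate hπpos hPnonneg hℙ (a :: u) b hB

include hπpos hPnonneg hℙ in
lemma chainStart_inter_hitsState_of_invariant {A : Set (ℕ → I)} (hA : MeasurableSet A)
    (hAinv : shift ⁻¹' A = A) (i j : I) :
    chainStart π ℙ j (A ∩ hitsState i) = chainStart π ℙ i A * chainStart π ℙ j (hitsState i) := by
  have hdisj := pairwise_disjoint_cyl_firstPassage (a := j) fun t (ht : i ∉ t) => ht
  have hpiece : ∀ t : {t : List I // i ∉ t}, chainStart π ℙ j (A ∩ cyl (j :: (t.1 ++ [i]))) =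
      chainStart π ℙ j (cyl (j :: (t.1 ++ [i]))) * chainStart π ℙ i A := fun t => by
    rw [← chainStart_cyl_inter_preimage_shift_iterate hπpos hPnonneg hℙ _ _ _ hA,
      preimage_shift_iterate_of_invariant hAinv, Set.inter_comm]
  rw [← chainStart_cyl_singleton_inter j (A ∩ _), ← chainStart_cyl_singleton_inter j (hitsState i),
    Set.inter_left_comm, cyl_singleton_inter_hitsState, Set.inter_iUnion,
    measure_iUnion (fun t t' h => (hdisj h).mono Set.inter_subset_right Set.inter_subset_right)
      fun t => hA.inter (measurableSet_cyl _),
    measure_iUnion hdisj fun t => measurableSet_cyl _, tsum_congr hpiece, ENNReal.tsum_mul_right,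
    mul_comm]

include hπpos hPnonneg hℙ in
lemma chainStart_eq_of_hitsState_eq_one {A : Set (ℕ → I)} (hA : MeasurableSet A)
    (hAinv : shift ⁻¹' A = A) {i j : I} (h : chainStart π ℙ j (hitsState i) = 1) :
    chainStart π ℙ j A = chainStart π ℙ i A := by
  have := isProbabilityMeasure_chainStart hπpos hℙ j
  rw [← measure_inter_conull ((prob_compl_eq_zero_iff (measurableSet_hitsState i)).2 h),
    chainStart_inter_hitsState_of_invariant hπpos hPnonneg hℙ hA hAinv, h, mul_one]

include hπpos hPnonneg hℙ in
lemma chainStart_visitsBeforeReturn_ne_zero {i j : I}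
    (hreach : chainStart π ℙ i (hitsState j) ≠ 0) :
    chainStart π ℙ i (visitsBeforeReturn i j) ≠ 0 := by
  rw [← chainStart_cyl_singleton_inter, cyl_singleton_inter_hitsState] at hreach
  obtain ⟨⟨t, hjt⟩, ht⟩ := not_forall.1 (mt measure_iUnion_null_iff.2 hreach)
  rw [chainStart_cyl_cons hπpos hℙ, ENNReal.ofReal_eq_zero, not_le] at ht
  obtain ⟨t', hjt', hit', ht'⟩ := exists_chainP_pos_not_mem hPnonneg t hjt ht
  refine fun h0 => (ENNReal.ofReal_pos.2 ht').ne' ?_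
  rw [← chainStart_cyl_cons hπpos hℙ]
  exact measure_mono_null (Set.subset_iUnion (fun t : {t : List I // j ∉ t ∧ i ∉ t} =>
    cyl (i :: (t.1 ++ [j]))) ⟨t', hjt', hit'⟩) h0

include hπpos hPnonneg hℙ in
lemma chainStart_hitsState_eq_one_of_recurrent {i j : I}
    (hreach : chainStart π ℙ i (hitsState j) ≠ 0) (hrec : chainStart π ℙ i (hitsState i) = 1) :
    chainStart π ℙ j (hitsState i) = 1 := by
  rcases eq_or_ne j i with rfl | hji
  · exact hrec
  have := isProbabilityMeasure_chainStart hπpos hℙ i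
  have := isProbabilityMeasure_chainStart hπpos hℙ j
  set v := chainStart π ℙ i (visitsBeforeReturn i j)
  set r := chainStart π ℙ j (hitsState i)
  have hv : v ≠ 0 := chainStart_visitsBeforeReturn_ne_zero hπpos hPnonneg hℙ hreach
  have hreturn : chainStart π ℙ i (⋃ t : {t : List I // j ∉ t ∧ i ∉ t},
      cyl (i :: (t.1 ++ [j])) ∩ shift^[t.1.length + 1] ⁻¹' hitsState i) ≤ v * r := by
    refine (measure_iUnion_le _).trans_eq ?_
    simp_rw [chainStart_cyl_inter_preimage_shift_iterate hπpos hPnonneg hℙ _ _ _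
      (measurableSet_hitsState i)]
    rw [ENNReal.tsum_mul_right, ← measure_iUnion
      (pairwise_disjoint_cyl_firstPassage fun t ht => ht.1) fun t => measurableSet_cyl _]
    rfl
  have hone : 1 ≤ 1 - v + v * r := calc
    1 = chainStart π ℙ i (hitsState i) := hrec.symm
    _ ≤ chainStart π ℙ i (visitsBeforeReturn i j)ᶜ + _ :=
      (measure_mono (hitsState_subset_visitsBeforeReturn_compl_union hji)).trans
        (measure_union_le _ _)
    _ ≤ 1 - v + v * r := by
      rw [prob_compl_eq_one_sub (measurableSet_visitsBeforeReturn i j)]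
      gcongr
  have hvr : v ≤ v * r := by
    have := add_le_add hone (le_refl v)
    rwa [add_right_comm, tsub_add_cancel_of_le prob_le_one,
      ENNReal.add_le_add_iff_left ENNReal.one_ne_top] at this
  exact le_antisymm prob_le_one
    ((ENNReal.mul_le_mul_iff_right hv (measure_ne_top _ _)).1 (by rwa [mul_one]))

include hπpos hPnonneg hℙ in
lemma restrict_eq_smul_of_chainStart_eq {A : Set (ℕ → I)} (hA : MeasurableSet A)
    (hAinv : shift ⁻¹' A = A) {c : ENNReal} (hc : ∀ a, chainStart π ℙ a A = c) :
    ℙ.restrict A = c • ℙ := by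
  have := isProbabilityMeasure_of_cyl hℙ
  refine measure_ext_cyl fun w hw => ?_
  obtain ⟨u, a, rfl⟩ := (List.eq_nil_or_concat w).resolve_left hw
  rw [List.concat_eq_append, Measure.restrict_apply (measurableSet_cyl _), Measure.smul_apply,
    smul_eq_mul, ← preimage_shift_iterate_of_invariant hAinv u.length,
    measure_cyl_inter_preimage_shift_iterate hπpos hPnonneg hℙ _ _ hA, hc, mul_comm]

end Markov

lemma measure_eq_zero_or_one_of_restrict_eq_smul {α : Type*} [MeasurableSpace α]
    {μ : Measure α} [IsProbabilityMeasure μ] {A : Set α} {c : ENNReal}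
    (h : μ.restrict A = c • μ) : μ A = 0 ∨ μ A = 1 := by
  have hc : μ A = c := by simpa using DFunLike.congr_fun h Set.univ
  have hAA : μ A * μ A = μ A * 1 := by
    simpa [hc] using (DFunLike.congr_fun h A).symm
  rcases eq_or_ne (μ A) 0 with h0 | h0
  · exact .inl h0
  · exact .inr ((ENNReal.mul_right_inj h0 (measure_ne_top μ A)).1 hAA)

theorem markov_irreducible_recurrent_ergodic_general
    {I : Type*} [Countable I] [MeasurableSpace I] [DiscreteMeasurableSpace I]
    (π : I → ℝ) (P : I → I → ℝ)
    (hπpos : ∀ i, 0 < π i)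
    (hPnonneg : ∀ i j, 0 ≤ P i j)
    (ℙ : Measure (ℕ → I))
    (hℙ : ∀ w : List I, ℙ (cyl w) = ENNReal.ofReal (wordProb π P w))
    (hirr : ∀ i j : I, chainStart π ℙ i (hitsState j) ≠ 0)
    (hrec : ∃ i : I, chainStart π ℙ i (hitsState i) = 1) :
    ∀ A : Set (ℕ → I), MeasurableSet A → shift ⁻¹' A = A → ℙ A = 0 ∨ ℙ A = 1 := by
  intro A hA hAinv
  obtain ⟨i₀, hrec⟩ := hrec
  have := isProbabilityMeasure_of_cyl hℙ
  have hconst : ∀ j, chainStart π ℙ j A = chainStart π ℙ i₀ A := fun j =>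
    chainStart_eq_of_hitsState_eq_one hπpos hPnonneg hℙ hA hAinv
      (chainStart_hitsState_eq_one_of_recurrent hπpos hPnonneg hℙ (hirr i₀ j) hrec)
  exact measure_eq_zero_or_one_of_restrict_eq_smul
    (restrict_eq_smul_of_chainStart_eq hπpos hPnonneg hℙ hA hAinv hconst)

/-- **Ergodicity of irreducible recurrent Markov chains.** -/
theorem markov_irreducible_recurrent_ergodic
    {I : Type*} [Countable I] [MeasurableSpace I] [DiscreteMeasurableSpace I]
    (π : I → ℝ) (P : I → I → ℝ)
    (hπpos : ∀ i, 0 < π i) (hπsum : HasSum π 1)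
    (hPnonneg : ∀ i j, 0 ≤ P i j) (hProw : ∀ i, HasSum (P i) 1)
    (ℙ : Measure (ℕ → I))
    (hℙ : ∀ w : List I, ℙ (cyl w) = ENNReal.ofReal (wordProb π P w))
    (hirr : ∀ i j : I, chainStart π ℙ i (hitsState j) ≠ 0)
    (hrec : ∃ i : I, chainStart π ℙ i (hitsState i) = 1) :
    ∀ A : Set (ℕ → I), MeasurableSet A → shift ⁻¹' A = A → ℙ A = 0 ∨ ℙ A = 1 :=
  markov_irreducible_recurrent_ergodic_general π P hπpos hPnonneg ℙ hℙ hirr hrec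
end
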